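/- arXiv:2311.09864 — 7 statements merged into one kernel-verified Lean document; each statement's English description precedes it below -/
import Mathlib

section
/- Let A ⊆ M_n(ℂ) be a block upper-triangular subalgebra and let A ∈ A be a matrix whose characteristic polynomial has n distinct complex roots. Then there exist an invertible matrix T ∈ A and a diagonal matrix D ∈ M_n(ℂ) such that A = T D T⁻¹. Furthermore, if A commutes with E_{ss} for some 1 ≤ s ≤ n, then T can be chosen so that additionally T commutes with E_{ss} and the (s,s) entry of T equals 1. -/
open Matrix

noncomputable section

/-- The block index function: `blockIdx k i` is the index `s` (0-based) of the diagonal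
block containing row/column `i`, for block sizes given by the list `k`. -/
def blockIdx (k : List ℕ) (i : ℕ) : ℕ :=
  ((Finset.range k.length).filter (fun s => (k.take (s + 1)).sum ≤ i)).card

/-- The block upper-triangular algebra `𝒜_{k₁,…,k_r} ⊆ M_n(ℂ)` determined by the
list of block sizes `k`. -/
def blockAlg (n : ℕ) (k : List ℕ) : Set (Matrix (Fin n) (Fin n) ℂ) :=
  { X | ∀ i j : Fin n, blockIdx k (j : ℕ) < blockIdx k (i : ℕ) → X i j = 0 }

/-- A subset of `M_n(ℂ)` is a block upper-triangular subalgebra if it is of the form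
`blockAlg n k` for some list `k` of positive integers summing to `n`. -/
def IsBlockUT (n : ℕ) (𝒜 : Set (Matrix (Fin n) (Fin n) ℂ)) : Prop :=
  ∃ k : List ℕ, (∀ m ∈ k, 0 < m) ∧ k.sum = n ∧ 𝒜 = blockAlg n k

/-- The exchange matrix `J` (ones on the antidiagonal). -/
def exchMat (n : ℕ) : Matrix (Fin n) (Fin n) ℂ :=
  Matrix.of fun i j => if (i : ℕ) + (j : ℕ) + 1 = n then 1 else 0

namespace BlockAux

open Polynomial Module
open scoped Classical

lemma sum_take_le (k : List ℕ) (a : ℕ) : (k.take a).sum ≤ k.sum := by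
  conv_rhs => rw [← List.take_append_drop a k]
  rw [List.sum_append]
  exact Nat.le_add_right _ _

lemma sum_take_mono (k : List ℕ) {a b : ℕ} (h : a ≤ b) :
    (k.take a).sum ≤ (k.take b).sum := by
  have : k.take a = (k.take b).take a := by
    rw [List.take_take, min_eq_left h]
  rw [this]
  exact sum_take_le _ _

lemma blockIdx_le_length (k : List ℕ) (i : ℕ) : blockIdx k i ≤ k.length := by
  refine le_trans (Finset.card_filter_le _ _) ?_
  simp

lemma blockIdx_le_iff (k : List ℕ) {i : ℕ} (hi : i < k.sum) (t : ℕ) :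
    blockIdx k i ≤ t ↔ i < (k.take (t + 1)).sum := by
  by_cases ht : t < k.length
  · constructor
    · intro h
      by_contra hcon
      push_neg at hcon
      have hsub : Finset.range (t + 1) ⊆
          (Finset.range k.length).filter (fun s => (k.take (s + 1)).sum ≤ i) := by
        intro s hs
        simp only [Finset.mem_range] at hs
        simp only [Finset.mem_filter, Finset.mem_range]
        exact ⟨by omega, le_trans (sum_take_mono k (by omega)) hcon⟩
      have := Finset.card_le_card hsub
      rw [Finset.card_range] at this
      unfold blockIdx at h
      omega
    · intro h
      have hsub : (Finset.range k.length).filter (fun s => (k.take (s + 1)).sum ≤ i)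
          ⊆ Finset.range t := by
        intro s hs
        simp only [Finset.mem_filter, Finset.mem_range] at hs ⊢
        by_contra hst
        push_neg at hst
        have := le_trans (sum_take_mono k (Nat.add_le_add_right hst 1)) hs.2
        omega
      have := Finset.card_le_card hsub
      rw [Finset.card_range] at this
      unfold blockIdx
      omega
  · push_neg at ht
    have h1 : k.take (t + 1) = k := List.take_of_length_le (by omega)
    rw [h1]
    simp only [hi, iff_true]
    exact le_trans (blockIdx_le_length k i) ht

variable {n : ℕ}

def V (k : List ℕ) (t : ℕ) : Submodule ℂ (Fin n → ℂ) where
  carrier := { x | ∀ i : Fin n, t < blockIdx k (i : ℕ) → x i = 0 }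
  add_mem' := by
    intro a b ha hb i hi
    simp [ha i hi, hb i hi]
  zero_mem' := by intro i _; rfl
  smul_mem' := by
    intro c x hx i hi
    simp [hx i hi]

lemma mem_V_iff {k : List ℕ} {t : ℕ} {x : Fin n → ℂ} :
    x ∈ V (n := n) k t ↔ ∀ i : Fin n, t < blockIdx k (i : ℕ) → x i = 0 := Iff.rfl

lemma V_mono (k : List ℕ) {t t' : ℕ} (h : t ≤ t') : V (n := n) k t ≤ V k t' :=
  fun _ hx i hi => hx i (lt_of_le_of_lt h hi)

lemma mem_V_top (k : List ℕ) (x : Fin n → ℂ) : x ∈ V (n := n) k k.length :=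
  fun i hi => absurd (blockIdx_le_length k i) (by omega)

lemma mul_mem_blockAlg {k : List ℕ} {X Y : Matrix (Fin n) (Fin n) ℂ}
    (hX : X ∈ blockAlg n k) (hY : Y ∈ blockAlg n k) : X * Y ∈ blockAlg n k := by
  intro i j h
  rw [Matrix.mul_apply]
  apply Finset.sum_eq_zero
  intro l _
  rcases lt_or_ge (blockIdx k (l : ℕ)) (blockIdx k (i : ℕ)) with hl | hl
  · rw [hX i l hl, zero_mul]
  · rw [hY l j (lt_of_lt_of_le h hl), mul_zero]

def blockSubalg (n : ℕ) (k : List ℕ) : Subalgebra ℂ (Matrix (Fin n) (Fin n) ℂ) where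
  carrier := blockAlg n k
  mul_mem' := mul_mem_blockAlg
  add_mem' := by
    intro X Y hX hY i j h
    simp [Matrix.add_apply, hX i j h, hY i j h]
  one_mem' := by
    intro i j h
    have hne : i ≠ j := by rintro rfl; omega
    simp [Matrix.one_apply, hne]
  zero_mem' := by intro i j h; rfl
  algebraMap_mem' := by
    intro c i j h
    have hne : i ≠ j := by rintro rfl; omega
    simp [Matrix.algebraMap_matrix_apply, hne]

lemma aeval_mem {k : List ℕ} {A : Matrix (Fin n) (Fin n) ℂ} (hA : A ∈ blockAlg n k)
    (p : ℂ[X]) : aeval A p ∈ blockAlg n k := by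
  have h1 : Algebra.adjoin ℂ {A} ≤ blockSubalg n k :=
    Algebra.adjoin_le (Set.singleton_subset_iff.mpr hA)
  exact h1 (Polynomial.aeval_mem_adjoin_singleton ℂ A)

lemma smul_mem_blockAlg {k : List ℕ} (c : ℂ) {X : Matrix (Fin n) (Fin n) ℂ}
    (hX : X ∈ blockAlg n k) : c • X ∈ blockAlg n k :=
  (blockSubalg n k).smul_mem hX c

lemma inv_mem_blockAlg {k : List ℕ} {T : Matrix (Fin n) (Fin n) ℂ}
    (hT : T ∈ blockAlg n k) (hdet : IsUnit T.det) : T⁻¹ ∈ blockAlg n k := by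
  set p := T.charpoly with hp
  have hc0 : p.coeff 0 ≠ 0 := by
    intro h
    have hd := Matrix.det_eq_sign_charpoly_coeff T
    rw [← hp, h, mul_zero] at hd
    rw [hd] at hdet
    simp at hdet
  have hch : aeval T p = 0 := Matrix.aeval_self_charpoly T
  have key : ((-(p.coeff 0))⁻¹ • aeval T (divX p)) * T = 1 := by
    have h2 : aeval T (divX p) * T + (p.coeff 0) • (1 : Matrix (Fin n) (Fin n) ℂ) = 0 := by
      have h3 := congrArg (aeval T) (divX_mul_X_add p)
      rw [map_add, _root_.map_mul, aeval_X, aeval_C, hch] at h3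
      rw [← h3, Algebra.algebraMap_eq_smul_one]
    have h3 : aeval T (divX p) * T = (-(p.coeff 0)) • (1 : Matrix (Fin n) (Fin n) ℂ) := by
      rw [neg_smul]
      exact eq_neg_of_add_eq_zero_left h2
    rw [smul_mul_assoc, h3, smul_smul, inv_mul_cancel₀ (neg_ne_zero.mpr hc0), one_smul]
  rw [Matrix.inv_eq_left_inv key]
  exact smul_mem_blockAlg _ (aeval_mem hT _)

lemma mulVec_mem_V {k : List ℕ} {B : Matrix (Fin n) (Fin n) ℂ} (hB : B ∈ blockAlg n k)
    {t : ℕ} {x : Fin n → ℂ} (hx : x ∈ V (n := n) k t) : B *ᵥ x ∈ V (n := n) k t := by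
  intro i hi
  show ∑ j, B i j * x j = 0
  apply Finset.sum_eq_zero
  intro j _
  rcases le_or_gt (blockIdx k (j : ℕ)) t with hj | hj
  · rw [hB i j (lt_of_le_of_lt hj hi), zero_mul]
  · rw [hx j hj, mul_zero]


lemma aeval_prod_mulVec {A : Matrix (Fin n) (Fin n) ℂ} {w : Fin n → ℂ} {μ : ℂ}
    (hw : A *ᵥ w = μ • w) (s : Finset ℂ) :
    (aeval A (∏ x ∈ s, (X - C x))) *ᵥ w = (∏ x ∈ s, (μ - x)) • w := by
  classical
  induction s using Finset.induction with
  | empty => simp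
  | @insert a s ha ih =>
    rw [Finset.prod_insert ha, Finset.prod_insert ha, _root_.map_mul, ← Matrix.mulVec_mulVec, ih]
    have h1 : aeval A (X - C a) = A - a • (1 : Matrix (Fin n) (Fin n) ℂ) := by
      rw [map_sub, aeval_X, aeval_C, Algebra.algebraMap_eq_smul_one]
    rw [h1, Matrix.mulVec_smul, Matrix.sub_mulVec, hw, Matrix.smul_mulVec,
      Matrix.one_mulVec, ← sub_smul, smul_smul, mul_comm]

lemma count_lower {k : List ℕ} (hsum : k.sum = n) {A : Matrix (Fin n) (Fin n) ℂ}
    (hA : A ∈ blockAlg n k) {Λ : Finset ℂ} (hΛ : Λ.card = n)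
    {v : ℂ → Fin n → ℂ} (hv0 : ∀ μ ∈ Λ, v μ ≠ 0) (hv1 : ∀ μ ∈ Λ, A *ᵥ v μ = μ • v μ)
    (t : ℕ) :
    (k.take (t + 1)).sum ≤ (Λ.filter (fun μ => v μ ∈ V (n := n) k t)).card := by
  classical
  set m := (k.take (t + 1)).sum with hm
  rcases Nat.eq_zero_or_pos m with hm0 | hm0
  · omega
  have hmn : m ≤ n := hsum ▸ sum_take_le k (t + 1)
  have hn : 0 < n := lt_of_lt_of_le hm0 hmn
  have hΛne : Λ.Nonempty := Finset.card_pos.mp (by omega)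
  haveI : Nonempty ↥Λ := hΛne.to_subtype
  set u : ↥Λ → (Fin n → ℂ) := fun μ => v ↑μ with hu
  have hindep : LinearIndependent ℂ u := by
    apply Module.End.eigenvectors_linearIndependent' (Matrix.mulVecLin A)
      (fun μ : ↥Λ => (μ : ℂ)) Subtype.coe_injective
    intro μ
    refine ⟨Module.End.mem_eigenspace_iff.mpr ?_, hv0 μ μ.2⟩
    simpa using hv1 μ μ.2
  have hcard : Fintype.card ↥Λ = finrank ℂ (Fin n → ℂ) := by
    simp [hΛ, Module.finrank_fintype_fun_eq_card]
  set b := basisOfLinearIndependentOfCardEqFinrank hindep hcard with hbdef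
  have hb : ⇑b = u := coe_basisOfLinearIndependentOfCardEqFinrank _ _
  set S := Λ.filter (fun μ => v μ ∈ V (n := n) k t) with hS
  set W := Submodule.span ℂ (↑(S.image v) : Set (Fin n → ℂ)) with hW
  have hVW : V (n := n) k t ≤ W := by
    intro x hx
    have hexp := b.sum_repr x
    rw [← hexp]
    apply Submodule.sum_mem
    intro ν _
    rcases eq_or_ne (b.repr x ν) 0 with h0 | h0
    · rw [h0, zero_smul]; exact Submodule.zero_mem _
    · apply Submodule.smul_mem
      have hvV : v ↑ν ∈ V (n := n) k t := by
        set c : ℂ := ∏ y ∈ Λ.erase ↑ν, ((ν : ℂ) - y) with hc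
        have hcne : c ≠ 0 := by
          rw [hc]
          apply Finset.prod_ne_zero_iff.mpr
          intro y hy
          have hne : y ≠ ↑ν := Finset.ne_of_mem_erase hy
          intro hcon
          exact hne (by linear_combination -hcon)
        set P := aeval A (∏ y ∈ Λ.erase ↑ν, (X - C y)) with hP
        have hPu : ∀ μ' : ↥Λ, μ' ≠ ν → P *ᵥ u μ' = 0 := by
          intro μ' hne
          rw [hP, aeval_prod_mulVec (hv1 _ μ'.2)]
          have : ∏ y ∈ Λ.erase ↑ν, ((μ' : ℂ) - y) = 0 := by
            apply Finset.prod_eq_zero (i := (μ' : ℂ))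
            · exact Finset.mem_erase.mpr ⟨fun h => hne (Subtype.ext h), μ'.2⟩
            · ring
          rw [this, zero_smul]
        have hPν : P *ᵥ u ν = c • v ↑ν := by
          rw [hP, aeval_prod_mulVec (hv1 _ ν.2), hc]
        have hPx : P *ᵥ x = (b.repr x ν * c) • v ↑ν := by
          conv_lhs => rw [← hexp]
          have : P *ᵥ (∑ μ' : ↥Λ, b.repr x μ' • b μ') =
              ∑ μ' : ↥Λ, b.repr x μ' • (P *ᵥ b μ') := by
            simp only [← Matrix.mulVecLin_apply, map_sum, _root_.map_smul]
          rw [this, Finset.sum_eq_single ν]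
          · rw [hb, hPν, smul_smul]
          · intro μ' _ hne
            rw [hb, hPu μ' hne, smul_zero]
          · intro h; exact absurd (Finset.mem_univ ν) h
        have hPmem : P ∈ blockAlg n k := aeval_mem hA _
        have hPxV : P *ᵥ x ∈ V (n := n) k t := mulVec_mem_V hPmem hx
        rw [hPx] at hPxV
        have hd : b.repr x ν * c ≠ 0 := mul_ne_zero h0 hcne
        have h5 := Submodule.smul_mem _ ((b.repr x ν * c)⁻¹) hPxV
        rwa [smul_smul, inv_mul_cancel₀ hd, one_smul] at h5
      rw [hb]
      apply Submodule.subset_span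
      refine Finset.mem_coe.mpr (Finset.mem_image.mpr ⟨↑ν, ?_, rfl⟩)
      exact Finset.mem_filter.mpr ⟨ν.2, hvV⟩
  have h1 : m ≤ finrank ℂ W := by
    have hmem : ∀ i : Fin n, (i : ℕ) < m → (Pi.single i 1 : Fin n → ℂ) ∈ W := by
      intro i hi
      apply hVW
      intro i' hi'
      by_cases h : i' = i
      · subst h
        exfalso
        have hilt : (i' : ℕ) < k.sum := by omega
        have := (blockIdx_le_iff k hilt t).mpr (hm ▸ hi)
        omega
      · exact Pi.single_eq_of_ne h 1
    have hcardι : Fintype.card {i : Fin n // (i : ℕ) < m} = m := by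
      have e : {i : Fin n // (i : ℕ) < m} ≃ Fin m :=
        { toFun := fun x => ⟨(x.1 : ℕ), x.2⟩
          invFun := fun y => ⟨⟨(y : ℕ), lt_of_lt_of_le y.2 hmn⟩, y.2⟩
          left_inv := fun x => by ext; rfl
          right_inv := fun y => by ext; rfl }
      rw [Fintype.card_congr e, Fintype.card_fin]
    have hind2 : LinearIndependent ℂ
        (fun x : {i : Fin n // (i : ℕ) < m} => (⟨Pi.single x.1 1, hmem x.1 x.2⟩ : W)) := by
      apply LinearIndependent.of_comp W.subtype
      have heq : (W.subtype ∘ fun x : {i : Fin n // (i : ℕ) < m} =>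
          (⟨Pi.single x.1 1, hmem x.1 x.2⟩ : W)) =
          (fun x : {i : Fin n // (i : ℕ) < m} => Pi.single x.1 1) := rfl
      rw [heq]
      have h2 := (Pi.basisFun ℂ (Fin n)).linearIndependent.comp
        (fun x : {i : Fin n // (i : ℕ) < m} => x.1) Subtype.val_injective
      convert h2 using 1
      funext x
      simp [Pi.basisFun_apply]
  -- removed
      
    have h3 := hind2.fintype_card_le_finrank
    rwa [hcardι] at h3
  have h2 : finrank ℂ W ≤ S.card := by
    refine le_trans ?_ (Finset.card_image_le (f := v) (s := S))
    have := finrank_span_finset_le_card (R := ℂ) (S.image v)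
    simpa [Set.finrank] using this
  omega


lemma exists_sorted_enum (Λ : Finset ℂ) (hΛ : Λ.card = n) (d : ℂ → ℕ) (m : ℕ → ℕ)
    (hcount : ∀ t, m t ≤ (Λ.filter (fun μ => d μ ≤ t)).card) :
    ∃ σ : Fin n → ℂ, Function.Injective σ ∧ (∀ j, σ j ∈ Λ) ∧
      ∀ (j : Fin n) (t : ℕ), (j : ℕ) < m t → d (σ j) ≤ t := by
  let e0 : Fin n ≃ ↥Λ := (finCongr hΛ.symm).trans Λ.equivFin.symm
  let f : Fin n → ℕ := fun j => d ↑(e0 j)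
  let π : Equiv.Perm (Fin n) := Tuple.sort f
  refine ⟨fun j => ↑(e0 (π j)), ?_, fun j => (e0 (π j)).2, ?_⟩
  · exact Subtype.val_injective.comp (e0.injective.comp π.injective)
  · intro j t hj
    by_contra hcon
    push_neg at hcon
    have hmono : Monotone (f ∘ π) := Tuple.monotone_sort f
    have hc1 : ((Finset.univ : Finset (Fin n)).filter (fun j' => f (π j') ≤ t)).card =
        (Λ.filter (fun μ => d μ ≤ t)).card := by
      apply Finset.card_nbij (i := fun j' => (↑(e0 (π j')) : ℂ))
      · intro j' hj'
        simp only [Finset.mem_coe, Finset.mem_filter, Finset.mem_univ, true_and] at hj'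
        exact Finset.mem_filter.mpr ⟨(e0 (π j')).2, hj'⟩
      · intro a _ b _ hab
        exact π.injective (e0.injective (Subtype.ext hab))
      · intro μ hμ
        simp only [Finset.coe_filter, Set.mem_setOf_eq] at hμ
        refine ⟨π.symm (e0.symm ⟨μ, hμ.1⟩), ?_, ?_⟩
        · simp only [Finset.coe_filter, Set.mem_setOf_eq, Finset.mem_univ, true_and, f]
          simpa using hμ.2
        · simp
    have hsub : ((Finset.univ : Finset (Fin n)).filter (fun j' => f (π j') ≤ t)) ⊆
        ((Finset.univ : Finset (Fin n)).filter (fun j' => j' < j)) := by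
      intro j' hj'
      simp only [Finset.mem_filter, Finset.mem_univ, true_and] at hj' ⊢
      by_contra hge
      push_neg at hge
      have h5 := hmono hge
      simp only [Function.comp_apply] at h5
      have hcon' : t < f (π j) := hcon
      omega
    have hcard_le : ((Finset.univ : Finset (Fin n)).filter (fun j' => j' < j)).card ≤ (j : ℕ) := by
      have : ((Finset.univ : Finset (Fin n)).filter (fun j' => j' < j)).card ≤
          (Finset.range (j : ℕ)).card := by
        refine Finset.card_le_card_of_injOn (fun j' => (j' : ℕ)) ?_ ?_
        · intro j' hj'
          simp only [Finset.mem_coe, Finset.mem_filter, Finset.mem_univ, true_and] at hj'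
          simp only [Finset.mem_coe, Finset.mem_range]
          exact hj'
        · intro a _ b _ hab
          exact Fin.ext hab
      simpa using this
    have h1 := hcount t
    have h2 := Finset.card_le_card hsub
    omega

lemma exists_enum {k : List ℕ} (hsum : k.sum = n) {A : Matrix (Fin n) (Fin n) ℂ}
    (hA : A ∈ blockAlg n k) {Λ : Finset ℂ} (hΛ : Λ.card = n)
    {v : ℂ → Fin n → ℂ} (hv0 : ∀ μ ∈ Λ, v μ ≠ 0) (hv1 : ∀ μ ∈ Λ, A *ᵥ v μ = μ • v μ) :
    ∃ σ : Fin n → ℂ, Function.Injective σ ∧ (∀ j, σ j ∈ Λ) ∧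
      ∀ j : Fin n, v (σ j) ∈ V (n := n) k (blockIdx k (j : ℕ)) := by
  have hex : ∀ μ : ℂ, ∃ t, v μ ∈ V (n := n) k t := fun μ => ⟨k.length, mem_V_top k (v μ)⟩
  set d : ℂ → ℕ := fun μ => Nat.find (hex μ) with hd
  have hdle : ∀ μ t, d μ ≤ t ↔ v μ ∈ V (n := n) k t := by
    intro μ t
    constructor
    · intro h
      exact V_mono k h (Nat.find_spec (hex μ))
    · intro h
      exact Nat.find_min' (hex μ) h
  obtain ⟨σ, hinj, hmem, hb⟩ := exists_sorted_enum Λ hΛ d (fun t => (k.take (t + 1)).sum)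
    (fun t => by
      refine le_trans (count_lower hsum hA hΛ hv0 hv1 t) (le_of_eq ?_)
      congr 1
      apply Finset.filter_congr
      intro μ _
      simp [hdle μ t])
  refine ⟨σ, hinj, hmem, fun j => ?_⟩
  have hjn : (j : ℕ) < k.sum := by rw [hsum]; exact j.2
  exact (hdle _ _).mp (hb j (blockIdx k (j : ℕ)) ((blockIdx_le_iff k hjn _).mp le_rfl))


lemma eval_charpoly_eq (A : Matrix (Fin n) (Fin n) ℂ) (μ : ℂ) :
    A.charpoly.eval μ = (μ • (1 : Matrix (Fin n) (Fin n) ℂ) - A).det := by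
  rw [Matrix.charpoly, ← Polynomial.coe_evalRingHom, RingHom.map_det]
  congr 1
  ext i j
  by_cases h : i = j
  · subst h
    simp [Matrix.charmatrix_apply_eq, Matrix.one_apply_eq]
  · simp [Matrix.charmatrix_apply_ne _ _ _ h, Matrix.one_apply_ne h]

lemma build_T {k : List ℕ} (hsum : k.sum = n) {A : Matrix (Fin n) (Fin n) ℂ}
    (hA : A ∈ blockAlg n k) {Λ : Finset ℂ} {v : ℂ → Fin n → ℂ}
    (hv0 : ∀ μ ∈ Λ, v μ ≠ 0) (hv1 : ∀ μ ∈ Λ, A *ᵥ v μ = μ • v μ)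
    {σ : Fin n → ℂ} (hinj : Function.Injective σ) (hmem : ∀ j, σ j ∈ Λ)
    (hcol : ∀ j : Fin n, v (σ j) ∈ V (n := n) k (blockIdx k (j : ℕ))) :
    ∃ T ∈ blockAlg n k, IsUnit T.det ∧ T⁻¹ ∈ blockAlg n k ∧ (∀ i j, T i j = v (σ j) i) ∧
      A = T * Matrix.diagonal σ * T⁻¹ := by
  set T : Matrix (Fin n) (Fin n) ℂ := Matrix.of (fun i j => v (σ j) i) with hT
  have hTmem : T ∈ blockAlg n k := fun i j h => hcol j i h
  have hunit : IsUnit T := by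
    rw [← Matrix.linearIndependent_cols_iff_isUnit]
    have heq : T.col = fun j => v (σ j) := by
      funext j; funext i; rfl
    rw [heq]
    exact Module.End.eigenvectors_linearIndependent' (Matrix.mulVecLin A) σ hinj _
      (fun j => ⟨Module.End.mem_eigenspace_iff.mpr (by simpa using hv1 _ (hmem j)),
        hv0 _ (hmem j)⟩)
  have hdet : IsUnit T.det := (Matrix.isUnit_iff_isUnit_det T).mp hunit
  have hAT : A * T = T * Matrix.diagonal σ := by
    ext i j
    rw [Matrix.mul_apply, Matrix.mul_diagonal]
    have h1 : ∑ l, A i l * T l j = (A *ᵥ (v (σ j))) i := rfl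
    rw [h1, hv1 _ (hmem j)]
    simp [hT, mul_comm]
  refine ⟨T, hTmem, hdet, inv_mem_blockAlg hTmem hdet, fun i j => rfl, ?_⟩
  calc A = A * (T * T⁻¹) := by rw [Matrix.mul_nonsing_inv T hdet, mul_one]
    _ = (A * T) * T⁻¹ := by rw [mul_assoc]
    _ = T * Matrix.diagonal σ * T⁻¹ := by rw [hAT]

end BlockAux

open Polynomial BlockAux

theorem diagonalizable_within_blockAlg {n : ℕ} (𝒜 : Set (Matrix (Fin n) (Fin n) ℂ))
    (h𝒜 : IsBlockUT n 𝒜) (A : Matrix (Fin n) (Fin n) ℂ) (hA : A ∈ 𝒜)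
    (hroots : A.charpoly.roots.toFinset.card = n) :
    (∃ T ∈ 𝒜, IsUnit T.det ∧ T⁻¹ ∈ 𝒜 ∧
      ∃ d : Fin n → ℂ, A = T * Matrix.diagonal d * T⁻¹) ∧
    (∀ s : Fin n,
      A * Matrix.single s s 1 = Matrix.single s s 1 * A →
      ∃ T ∈ 𝒜, IsUnit T.det ∧ T⁻¹ ∈ 𝒜 ∧
        T * Matrix.single s s 1 = Matrix.single s s 1 * T ∧
        T s s = 1 ∧
        ∃ d : Fin n → ℂ, A = T * Matrix.diagonal d * T⁻¹) := by
  classical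
  obtain ⟨k, hkpos, hksum, h𝒜eq⟩ := h𝒜
  subst h𝒜eq
  have hmonic : A.charpoly.Monic := A.charpoly_monic
  have hdeg : A.charpoly.natDegree = n := by
    rw [Matrix.charpoly_natDegree_eq_dim, Fintype.card_fin]
  set Λ := A.charpoly.roots.toFinset with hΛdef
  have hΛcard : Λ.card = n := hroots
  -- eigenvector existence for each root
  have hev : ∀ μ ∈ Λ, ∃ w : Fin n → ℂ, w ≠ 0 ∧ A *ᵥ w = μ • w := by
    intro μ hμ
    have hroot : A.charpoly.IsRoot μ := by
      rw [hΛdef, Multiset.mem_toFinset] at hμ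
      exact (Polynomial.mem_roots'.mp hμ).2
    have hdet0 : (μ • (1 : Matrix (Fin n) (Fin n) ℂ) - A).det = 0 := by
      rw [← eval_charpoly_eq]; exact hroot
    obtain ⟨w, hw0, hw⟩ := Matrix.exists_mulVec_eq_zero_iff.mpr hdet0
    refine ⟨w, hw0, ?_⟩
    rw [Matrix.sub_mulVec, sub_eq_zero, Matrix.smul_mulVec, Matrix.one_mulVec] at hw
    exact hw.symm
  choose w hw0 hw1 using hev
  constructor
  · -- Part 1
    set v : ℂ → Fin n → ℂ := fun μ => if h : μ ∈ Λ then w μ h else 0 with hv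
    have hv0 : ∀ μ ∈ Λ, v μ ≠ 0 := fun μ h => by simp only [hv, dif_pos h]; exact hw0 μ h
    have hv1 : ∀ μ ∈ Λ, A *ᵥ v μ = μ • v μ := fun μ h => by
      simp only [hv, dif_pos h]; exact hw1 μ h
    obtain ⟨σ, hinj, hmem, hcol⟩ := exists_enum hksum hA hΛcard hv0 hv1
    obtain ⟨T, hT1, hT2, hT3, _, hT5⟩ := build_T hksum hA hv0 hv1 hinj hmem hcol
    exact ⟨T, hT1, hT2, hT3, σ, hT5⟩
  · -- Part 2
    intro s hcomm
    have hE : ∀ (B : Matrix (Fin n) (Fin n) ℂ) (i j : Fin n),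
        (B * Matrix.single s s (1 : ℂ)) i j = if j = s then B i s else 0 := by
      intro B i j
      rw [Matrix.mul_apply, Finset.sum_eq_single s]
      · by_cases h : j = s
        · simp [Matrix.single, h]
        · simp [Matrix.single, h, Ne.symm h]
      · intro l _ hl
        simp [Matrix.single, Ne.symm hl]
      · simp
    have hE' : ∀ (B : Matrix (Fin n) (Fin n) ℂ) (i j : Fin n),
        (Matrix.single s s (1 : ℂ) * B) i j = if i = s then B s j else 0 := by
      intro B i j
      rw [Matrix.mul_apply, Finset.sum_eq_single s]
      · by_cases h : i = s
        · simp [Matrix.single, h]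
        · simp [Matrix.single, h, Ne.symm h]
      · intro l _ hl
        simp [Matrix.single, Ne.symm hl]
      · simp
    have hrow : ∀ j : Fin n, j ≠ s → A s j = 0 := by
      intro j hj
      have h1 := congrFun (congrFun hcomm s) j
      rw [hE A s j, hE' A s j] at h1
      simpa [hj] using h1.symm
    have hcolA : ∀ i : Fin n, i ≠ s → A i s = 0 := by
      intro i hi
      have h1 := congrFun (congrFun hcomm i) s
      rw [hE A i s, hE' A i s] at h1
      simpa [hi] using h1
    set μ0 := A s s with hμ0
    have hes : A *ᵥ (Pi.single s 1 : Fin n → ℂ) = μ0 • (Pi.single s 1 : Fin n → ℂ) := by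
      funext i
      have h1 : (A *ᵥ (Pi.single s 1 : Fin n → ℂ)) i = A i s := by
        show ∑ j, A i j * (Pi.single s 1 : Fin n → ℂ) j = A i s
        rw [Finset.sum_eq_single s]
        · simp
        · intro l _ hl; simp [Pi.single_eq_of_ne hl]
        · simp
      rw [h1]
      by_cases h : i = s
      · subst h; simp [hμ0]
      · simp [hcolA i h, Pi.single_eq_of_ne h]
    have hsingle_ne : (Pi.single s 1 : Fin n → ℂ) ≠ 0 := by
      intro hcon
      have := congrFun hcon s
      simp at this
    have hμ0Λ : μ0 ∈ Λ := by
      have hdet0 : (μ0 • (1 : Matrix (Fin n) (Fin n) ℂ) - A).det = 0 := by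
        rw [← Matrix.exists_mulVec_eq_zero_iff]
        refine ⟨Pi.single s 1, hsingle_ne, ?_⟩
        rw [Matrix.sub_mulVec, hes, Matrix.smul_mulVec, Matrix.one_mulVec, sub_self]
      have heval : A.charpoly.eval μ0 = 0 := by rw [eval_charpoly_eq]; exact hdet0
      rw [hΛdef, Multiset.mem_toFinset, Polynomial.mem_roots']
      exact ⟨hmonic.ne_zero, heval⟩
    set v : ℂ → Fin n → ℂ := fun μ =>
      if μ = μ0 then Pi.single s 1 else if h : μ ∈ Λ then w μ h else 0 with hv
    have hvμ0 : v μ0 = Pi.single s 1 := by simp [hv]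
    have hv0 : ∀ μ ∈ Λ, v μ ≠ 0 := by
      intro μ h
      by_cases hμ : μ = μ0
      · rw [hμ, hvμ0]; exact hsingle_ne
      · simp only [hv, if_neg hμ, dif_pos h]; exact hw0 μ h
    have hv1 : ∀ μ ∈ Λ, A *ᵥ v μ = μ • v μ := by
      intro μ h
      by_cases hμ : μ = μ0
      · rw [hμ, hvμ0]; exact hes
      · simp only [hv, if_neg hμ, dif_pos h]; exact hw1 μ h
    obtain ⟨σ, hinj, hmem, hcol⟩ := exists_enum hksum hA hΛcard hv0 hv1
    -- find s' with σ s' = μ0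
    obtain ⟨s', hs'⟩ : ∃ s', σ s' = μ0 := by
      let g : Fin n → ↥Λ := fun j => ⟨σ j, hmem j⟩
      have hginj : Function.Injective g := fun a b h => hinj (congrArg Subtype.val h)
      have hcards : Fintype.card (Fin n) = Fintype.card ↥Λ := by
        simp [hΛcard]
      have hgsurj : Function.Surjective g :=
        ((Fintype.bijective_iff_injective_and_card g).mpr ⟨hginj, hcards⟩).2
      obtain ⟨s', hs'⟩ := hgsurj ⟨μ0, hμ0Λ⟩
      exact ⟨s', congrArg Subtype.val hs'⟩
    set σ' : Fin n → ℂ := σ ∘ (Equiv.swap s s') with hσ'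
    have hinj' : Function.Injective σ' := hinj.comp (Equiv.injective _)
    have hmem' : ∀ j, σ' j ∈ Λ := fun j => hmem _
    have hσ's : σ' s = μ0 := by
      simp only [hσ', Function.comp_apply, Equiv.swap_apply_left]
      exact hs'
    have hble : blockIdx k (s : ℕ) ≤ blockIdx k (s' : ℕ) := by
      by_contra hcon
      push_neg at hcon
      have h1 := hcol s' s hcon
      rw [hs', hvμ0] at h1
      simp at h1
    have hcol' : ∀ j : Fin n, v (σ' j) ∈ V (n := n) k (blockIdx k (j : ℕ)) := by
      intro j
      by_cases hjs : j = s
      · rw [hjs, hσ's, hvμ0]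
        intro i hi
        have hne : i ≠ s := by
          rintro rfl
          omega
        exact Pi.single_eq_of_ne hne 1
      by_cases hjs' : j = s'
      · have h1 : σ' j = σ s := by
          rw [hjs']
          simp only [hσ', Function.comp_apply, Equiv.swap_apply_right]
        rw [h1, hjs']
        exact V_mono k hble (hcol s)
      · have h1 : σ' j = σ j := by
          simp only [hσ', Function.comp_apply,
            Equiv.swap_apply_of_ne_of_ne hjs hjs']
        rw [h1]
        exact hcol j
    obtain ⟨T, hT1, hT2, hT3, hTentry, hT5⟩ := build_T hksum hA hv0 hv1 hinj' hmem' hcol'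
    have hcolT : ∀ i, T i s = (Pi.single s 1 : Fin n → ℂ) i := by
      intro i; rw [hTentry, hσ's, hvμ0]
    have hTss : T s s = 1 := by rw [hcolT]; simp
    have hrowT : ∀ j : Fin n, j ≠ s → T s j = 0 := by
      intro j hj
      rw [hTentry]
      have hne : σ' j ≠ μ0 := by
        rw [← hσ's]
        exact fun h => hj (hinj' h)
      have h1 := congrFun (hv1 _ (hmem' j)) s
      have h2 : (A *ᵥ v (σ' j)) s = μ0 * v (σ' j) s := by
        show ∑ l, A s l * v (σ' j) l = μ0 * v (σ' j) s
        rw [Finset.sum_eq_single s]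
        · intro l _ hl; rw [hrow l hl, zero_mul]
        · simp
      rw [h2] at h1
      have h3 : (μ0 - σ' j) * (v (σ' j) s) = 0 := by
        have h4 : (σ' j • v (σ' j)) s = σ' j * v (σ' j) s := rfl
        rw [h4] at h1
        linear_combination h1
      rcases mul_eq_zero.mp h3 with h | h
      · exact absurd (sub_eq_zero.mp h).symm hne
      · exact h
    have hTE : T * Matrix.single s s 1 = Matrix.single s s 1 * T := by
      ext i j
      rw [hE T i j, hE' T i j]
      by_cases h1 : j = s <;> by_cases h2 : i = s
      · rw [if_pos h1, if_pos h2, h1, h2]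
      · rw [if_pos h1, if_neg h2, hcolT i]
        exact Pi.single_eq_of_ne h2 1
      · rw [if_neg h1, if_pos h2]
        exact (hrowT j h1).symm
      · rw [if_neg h1, if_neg h2]
    exact ⟨T, hT1, hT2, hT3, hTE, hTss, σ', hT5⟩
end
end

section
/- Let A and B be unital complex algebras with unities 1_A and 1_B, and let φ : A → B be a linear map satisfying φ(a²) = φ(a)² for all a ∈ A, such that 1_B lies in the image of φ. Then φ(1_A) = 1_B, and for every invertible a ∈ A the element φ(a) is invertible in B with φ(a)⁻¹ = φ(a⁻¹). -/
/-!
Polarizing `φ (a * a) = φ a * φ a` gives `φ (a * b + b * a) = φ a * φ b + φ b * φ a` and then the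
triple identity `φ (a * b * a) = φ a * φ b * φ a`. For a unit `a`, the elements `x = φ a` and
`y = φ a⁻¹` therefore satisfy `x * y * x = x`, `y * x * y = y` and `x * y + y * x = 2`, so `x * y`
and `y * x` are idempotents adding up to `2`, which forces both to be `1`.
-/

theorem eq_of_add_self_eq_add_self {M : Type*} [AddMonoid M] [IsAddTorsionFree M] {x y : M}
    (h : x + x = y + y) : x = y :=
  nsmul_right_injective two_ne_zero (by simpa only [two_nsmul] using h)

/-- Idempotents `p`, `q` with `p + q = 2` satisfy `p = p (2 - p) = p q = (2 - q) q = q`. -/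
theorem IsIdempotentElem.eq_one_of_add_eq_two {R : Type*} [Ring R] [IsAddTorsionFree R]
    {p q : R} (hp : IsIdempotentElem p) (hq : IsIdempotentElem q) (hsum : p + q = 1 + 1) :
    p = 1 := by
  have hq' : q = 1 + 1 - p := eq_sub_of_add_eq' hsum
  have hp' : p = 1 + 1 - q := eq_sub_of_add_eq hsum
  have hpq_eq_p : p * q = p := by
    rw [hq', mul_sub, mul_add, mul_one, hp.eq]; abel
  have hpq_eq_q : p * q = q := by
    rw [hp', sub_mul, add_mul, one_mul, hq.eq]; abel
  have hpq : p = q := hpq_eq_p.symm.trans hpq_eq_q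
  exact eq_of_add_self_eq_add_self (by rwa [← hpq] at hsum)

def IsJordanMap {A B F : Type*} [Mul A] [Mul B] [FunLike F A B] (φ : F) : Prop :=
  ∀ a, φ (a * a) = φ a * φ a

namespace IsJordanMap

variable {A B F : Type*} [Ring A] [Ring B] [FunLike F A B] [AddMonoidHomClass F A B] {φ : F}

theorem map_mul_add_mul_swap (hφ : IsJordanMap φ) (a b : A) :
    φ (a * b + b * a) = φ a * φ b + φ b * φ a := by
  have h := hφ (a + b)
  rw [show (a + b) * (a + b) = a * a + (a * b + b * a) + b * b by noncomm_ring] at h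
  simp only [map_add, hφ a, hφ b] at h
  rw [map_add]
  exact add_left_cancel (add_right_cancel (h.trans (by noncomm_ring)))

variable [IsAddTorsionFree B]

theorem map_mul_mul (hφ : IsJordanMap φ) (a b : A) : φ (a * b * a) = φ a * φ b * φ a := by
  have h := hφ.map_mul_add_mul_swap a (a * b + b * a)
  rw [show a * (a * b + b * a) + (a * b + b * a) * a
      = (a * a * b + b * (a * a)) + (a * b * a + a * b * a) by noncomm_ring,
    map_add, hφ.map_mul_add_mul_swap, hφ a, hφ.map_mul_add_mul_swap, map_add] at h
  refine eq_of_add_self_eq_add_self (add_left_cancel (h.trans ?_))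
  noncomm_ring

theorem map_one (hφ : IsJordanMap φ) (hone : (1 : B) ∈ Set.range φ) : φ 1 = 1 := by
  obtain ⟨u, hu⟩ := hone
  have h := hφ.map_mul_add_mul_swap u 1
  rw [mul_one, one_mul, map_add, hu, one_mul, mul_one] at h
  exact (eq_of_add_self_eq_add_self h).symm

theorem map_mul_eq_one (hφ : IsJordanMap φ) (hφ₁ : φ 1 = 1) {a b : A} (hab : a * b = 1)
    (hba : b * a = 1) : φ a * φ b = 1 := by
  have hsum : φ a * φ b + φ b * φ a = 1 + 1 := by
    rw [← hφ.map_mul_add_mul_swap, hab, hba, map_add, hφ₁]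
  have haba : φ a * φ b * φ a = φ a := by rw [← hφ.map_mul_mul, hab, one_mul]
  have hbab : φ b * φ a * φ b = φ b := by rw [← hφ.map_mul_mul, hba, one_mul]
  refine IsIdempotentElem.eq_one_of_add_eq_two ?_ ?_ hsum
  · rw [IsIdempotentElem, ← mul_assoc, haba]
  · rw [IsIdempotentElem, ← mul_assoc, hbab]

end IsJordanMap

theorem jordan_hom_unital_preserves_inverses {A B : Type*}
    [Ring A] [Algebra ℂ A] [Ring B] [Algebra ℂ B]
    (φ : A →ₗ[ℂ] B)
    (hjordan : ∀ a : A, φ (a * a) = φ a * φ a)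
    (hone : (1 : B) ∈ Set.range φ) :
    φ 1 = 1 ∧ ∀ a : Aˣ, φ (↑a) * φ (↑a⁻¹) = 1 ∧ φ (↑a⁻¹) * φ (↑a) = 1 := by
  have : IsAddTorsionFree B := .of_isTorsionFree ℂ B
  have hφ₁ : φ 1 = 1 := IsJordanMap.map_one hjordan hone
  exact ⟨hφ₁, fun a =>
    ⟨IsJordanMap.map_mul_eq_one hjordan hφ₁ a.mul_inv a.inv_mul,
      IsJordanMap.map_mul_eq_one hjordan hφ₁ a.inv_mul a.mul_inv⟩⟩
end

section
/- Let A = A_{k_1,…,k_p} and B = A_{l_1,…,l_q} be block upper-triangular subalgebras of M_n(ℂ). Then there exists a bijective linear map φ : A → B satisfying φ(XY) = φ(Y)φ(X) for all X, Y ∈ A (an algebra antiisomorphism) if and only if p = q and (k_1,…,k_p) = (l_q,…,l_1). -/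
open Matrix

noncomputable section

lemma downward_card {F : Finset ℕ} (hdc : ∀ a b : ℕ, a ≤ b → b ∈ F → a ∈ F) :
    ∀ s, s ∈ F ↔ s < F.card := by
  rcases F.eq_empty_or_nonempty with h | h
  · simp [h]
  · have hmax := F.max'_mem h
    have hF : F = Finset.range (F.max' h + 1) := by
      apply Finset.ext
      intro a
      simp only [Finset.mem_range]
      constructor
      · intro ha; exact Nat.lt_succ_of_le (F.le_max' a ha)
      · intro ha; exact hdc a _ (Nat.lt_succ_iff.mp ha) hmax
    rw [hF]; simp

lemma sum_take_le (k : List ℕ) (m : ℕ) : (k.take m).sum ≤ k.sum := by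
  conv_rhs => rw [← List.take_append_drop m k]
  rw [List.sum_append]; omega

lemma sum_take_mono (k : List ℕ) {m m' : ℕ} (h : m ≤ m') :
    (k.take m).sum ≤ (k.take m').sum := by
  have h2 : (k.take m').take m = k.take m := by rw [List.take_take, Nat.min_eq_left h]
  rw [← h2]; exact sum_take_le _ _

lemma sum_take_all (k : List ℕ) {m : ℕ} (h : k.length ≤ m) : (k.take m).sum = k.sum := by
  rw [List.take_of_length_le h]

lemma blockIdx_mem_iff (k : List ℕ) (i : ℕ) :
    ∀ s, s < blockIdx k i ↔ (s < k.length ∧ (k.take (s+1)).sum ≤ i) := by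
  intro s
  set F := ((Finset.range k.length).filter (fun s => (k.take (s + 1)).sum ≤ i)) with hF
  have hdc : ∀ a b : ℕ, a ≤ b → b ∈ F → a ∈ F := by
    intro a b hab hb
    simp only [hF, Finset.mem_filter, Finset.mem_range] at hb ⊢
    exact ⟨lt_of_le_of_lt hab hb.1, le_trans (sum_take_mono k (by omega)) hb.2⟩
  have h := downward_card hdc s
  rw [blockIdx, ← h, hF]
  simp [Finset.mem_filter]

lemma blockIdx_lt_iff {n : ℕ} {k : List ℕ} (hks : k.sum = n) {i : ℕ} (hi : i < n)
    (m : ℕ) : blockIdx k i < m ↔ i < (k.take m).sum := by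
  constructor
  · intro h
    have hb : ¬ (blockIdx k i < blockIdx k i) := lt_irrefl _
    rw [blockIdx_mem_iff] at hb
    push_neg at hb
    rcases Nat.lt_or_ge (blockIdx k i) k.length with hp | hp
    · have h1 := hb hp
      have h2 : (k.take (blockIdx k i + 1)).sum ≤ (k.take m).sum := sum_take_mono k (by omega)
      omega
    · have : (k.take m).sum = n := by
        rw [sum_take_all k (le_trans hp (by omega)), hks]
      omega
  · intro h
    by_contra hb
    push_neg at hb
    rcases Nat.eq_zero_or_pos (blockIdx k i) with h0 | h0
    · have : m = 0 := by omega
      simp [this] at h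
    · have hmem : blockIdx k i - 1 < blockIdx k i := by omega
      rw [blockIdx_mem_iff] at hmem
      have h2 : (k.take m).sum ≤ (k.take (blockIdx k i - 1 + 1)).sum :=
        sum_take_mono k (by omega)
      omega

lemma blockIdx_lt_length {n : ℕ} {k : List ℕ} (hks : k.sum = n) {i : ℕ} (hi : i < n) :
    blockIdx k i < k.length := by
  rw [blockIdx_lt_iff hks hi, sum_take_all k le_rfl, hks]; exact hi

lemma blockIdx_eq_iff {n : ℕ} {k : List ℕ} (hks : k.sum = n) {i : ℕ} (hi : i < n)
    (s : ℕ) : blockIdx k i = s ↔ ((k.take s).sum ≤ i ∧ i < (k.take (s+1)).sum) := by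
  constructor
  · intro h
    subst h
    constructor
    · by_contra hc
      push_neg at hc
      exact absurd ((blockIdx_lt_iff hks hi _).mpr hc) (lt_irrefl _)
    · exact (blockIdx_lt_iff hks hi _).mp (by omega)
  · intro ⟨h1, h2⟩
    have ha := (blockIdx_lt_iff hks hi (s+1)).mpr h2
    have hb := (blockIdx_lt_iff hks hi s).not.mpr (by omega)
    omega

lemma sum_take_reverse {n : ℕ} {k : List ℕ} (hks : k.sum = n) {s : ℕ} (h : s ≤ k.length) :
    (k.reverse.take s).sum = n - (k.take (k.length - s)).sum := by
  have h1 : (k.take (k.length - s)).reverse = k.reverse.drop (k.length - (k.length - s)) :=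
    List.reverse_take (l := k) (i := k.length - s)
  have h2 : k.length - (k.length - s) = s := by omega
  have h3 : (k.reverse.take s).sum + (k.reverse.drop s).sum = n := by
    rw [← List.sum_append, List.take_append_drop, List.sum_reverse, hks]
  rw [h2] at h1
  have h4 : (k.reverse.drop s).sum = (k.take (k.length - s)).sum := by
    rw [← h1, List.sum_reverse]
  omega

lemma blockIdx_rev {n : ℕ} {k : List ℕ} (hks : k.sum = n) {i : ℕ} (hi : i < n) :
    blockIdx k.reverse (n - 1 - i) = k.length - 1 - blockIdx k i := by
  have hrs : k.reverse.sum = n := by rw [List.sum_reverse, hks]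
  have hb := (blockIdx_eq_iff hks hi (blockIdx k i)).mp rfl
  have hlen := blockIdx_lt_length hks hi
  set b := blockIdx k i with hbdef
  have hsle : (k.take (b+1)).sum ≤ n := by rw [← hks]; exact sum_take_le _ _
  rw [blockIdx_eq_iff hrs (by omega) (k.length - 1 - b)]
  have ha1 : k.length - (k.length - 1 - b) = b + 1 := by omega
  have ha2 : k.length - (k.length - 1 - b + 1) = b := by omega
  have e1 : (k.reverse.take (k.length - 1 - b)).sum = n - (k.take (b+1)).sum := by
    rw [sum_take_reverse hks (by omega), ha1]
  have e2 : (k.reverse.take (k.length - 1 - b + 1)).sum = n - (k.take b).sum := by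
    rw [sum_take_reverse hks (by omega), ha2]
  rw [e1, e2]
  omega

section
variable {n : ℕ}

lemma length_le_sum {k : List ℕ} (hk : ∀ m ∈ k, 0 < m) : k.length ≤ k.sum := by
  induction k with
  | nil => simp
  | cons a t ih =>
    simp only [List.length_cons, List.sum_cons]
    have ha := hk a (by simp)
    have := ih (fun m hm => hk m (by simp [hm]))
    omega

lemma blockIdx_cons {a : ℕ} {t : List ℕ} {i : ℕ} (hi : a ≤ i) (hi2 : i < a + t.sum) :
    blockIdx (a :: t) i = blockIdx t (i - a) + 1 := by
  have h := (blockIdx_eq_iff (k := t) rfl (i := i - a) (by omega) (blockIdx t (i-a))).mp rfl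
  rw [blockIdx_eq_iff (k := a :: t) rfl (by simpa using hi2)]
  constructor
  · simpa [List.take_succ_cons] using by omega
  · simpa [List.take_succ_cons] using by omega

lemma blockIdx_cons_lt {a : ℕ} {t : List ℕ} {i : ℕ} (hi : i < a) :
    blockIdx (a :: t) i = 0 := by
  rw [blockIdx_eq_iff (k := a :: t) rfl (by simp; omega)]
  simpa using hi

lemma blockIdx_blockStart {k : List ℕ} (hk : ∀ m ∈ k, 0 < m) {s : ℕ} (hs : s < k.length) :
    blockIdx k ((k.take s).sum) = s := by
  have hlt : (k.take s).sum < (k.take (s+1)).sum := by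
    rw [List.sum_take_succ k s hs]
    have := hk (k[s]) (by exact List.getElem_mem hs)
    omega
  have hle : (k.take (s+1)).sum ≤ k.sum := sum_take_le k (s+1)
  rw [blockIdx_eq_iff rfl (by omega)]
  exact ⟨le_rfl, hlt⟩

-- closure lemmas
lemma blockAlg_zero (k : List ℕ) : (0 : Matrix (Fin n) (Fin n) ℂ) ∈ blockAlg n k :=
  fun _ _ _ => rfl

lemma blockAlg_add {k : List ℕ} {X Y : Matrix (Fin n) (Fin n) ℂ}
    (hX : X ∈ blockAlg n k) (hY : Y ∈ blockAlg n k) : X + Y ∈ blockAlg n k := by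
  intro i j h
  simp [Matrix.add_apply, hX i j h, hY i j h]

lemma blockAlg_smul {k : List ℕ} {c : ℂ} {X : Matrix (Fin n) (Fin n) ℂ}
    (hX : X ∈ blockAlg n k) : c • X ∈ blockAlg n k := by
  intro i j h
  simp [Matrix.smul_apply, hX i j h]

lemma blockAlg_mul {k : List ℕ} {X Y : Matrix (Fin n) (Fin n) ℂ}
    (hX : X ∈ blockAlg n k) (hY : Y ∈ blockAlg n k) : X * Y ∈ blockAlg n k := by
  intro i j h
  rw [Matrix.mul_apply]
  apply Finset.sum_eq_zero
  intro c _
  rcases Nat.lt_or_ge (blockIdx k (c : ℕ)) (blockIdx k (i : ℕ)) with hc | hc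
  · rw [hX i c hc, zero_mul]
  · rw [hY c j (by omega), mul_zero]

-- exchange matrix entry lemmas
lemma exchMat_apply (i j : Fin n) :
    exchMat n i j = if j = Fin.rev i then 1 else 0 := by
  have : ((i : ℕ) + (j : ℕ) + 1 = n) ↔ j = Fin.rev i := by
    rw [Fin.ext_iff, Fin.val_rev]
    omega
  simp [exchMat, this]

lemma exchMat_mul_apply (M : Matrix (Fin n) (Fin n) ℂ) (i j : Fin n) :
    (exchMat n * M) i j = M (Fin.rev i) j := by
  rw [Matrix.mul_apply]
  rw [Finset.sum_eq_single (Fin.rev i)]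
  · simp [exchMat_apply]
  · intro b _ hb
    simp [exchMat_apply, hb]
  · simp

lemma mul_exchMat_apply (M : Matrix (Fin n) (Fin n) ℂ) (i j : Fin n) :
    (M * exchMat n) i j = M i (Fin.rev j) := by
  rw [Matrix.mul_apply]
  rw [Finset.sum_eq_single (Fin.rev j)]
  · have : (j : Fin n) = Fin.rev (Fin.rev j) := (Fin.rev_rev j).symm
    rw [exchMat_apply]
    simp [← this]
  · intro b _ hb
    rw [exchMat_apply]
    have : ¬ (j = Fin.rev b) := by
      intro h; apply hb; rw [h, Fin.rev_rev]
    simp [this]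
  · simp

def phi0 (n : ℕ) (X : Matrix (Fin n) (Fin n) ℂ) : Matrix (Fin n) (Fin n) ℂ :=
  exchMat n * Xᵀ * exchMat n

lemma phi0_apply (X : Matrix (Fin n) (Fin n) ℂ) (i j : Fin n) :
    phi0 n X i j = X (Fin.rev j) (Fin.rev i) := by
  rw [phi0, mul_exchMat_apply, exchMat_mul_apply, Matrix.transpose_apply]

lemma phi0_phi0 (X : Matrix (Fin n) (Fin n) ℂ) : phi0 n (phi0 n X) = X := by
  ext i j
  rw [phi0_apply, phi0_apply, Fin.rev_rev, Fin.rev_rev]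

lemma phi0_mul (X Y : Matrix (Fin n) (Fin n) ℂ) :
    phi0 n (X * Y) = phi0 n Y * phi0 n X := by
  ext i j
  rw [phi0_apply, Matrix.mul_apply, Matrix.mul_apply]
  rw [← Equiv.sum_comp (Fin.revPerm) (fun c => phi0 n Y i c * phi0 n X c j)]
  apply Finset.sum_congr rfl
  intro c _
  simp only [Fin.revPerm_apply, phi0_apply, Fin.rev_rev]
  ring

lemma phi0_add (X Y : Matrix (Fin n) (Fin n) ℂ) :
    phi0 n (X + Y) = phi0 n X + phi0 n Y := by
  simp [phi0, Matrix.transpose_add, Matrix.mul_add, Matrix.add_mul]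

lemma phi0_smul (c : ℂ) (X : Matrix (Fin n) (Fin n) ℂ) :
    phi0 n (c • X) = c • phi0 n X := by
  simp [phi0, Matrix.transpose_smul, Matrix.mul_smul, Matrix.smul_mul]

lemma blockIdx_rev_fin {k : List ℕ} (hks : k.sum = n) (i : Fin n) :
    blockIdx k.reverse ((Fin.rev i : Fin n) : ℕ) = k.length - 1 - blockIdx k (i : ℕ) := by
  rw [Fin.val_rev]
  have : (n : ℕ) - ((i : ℕ) + 1) = n - 1 - (i : ℕ) := by omega
  rw [this]
  exact blockIdx_rev hks i.isLt

lemma phi0_mapsTo {l : List ℕ} (hls : l.sum = n) {X : Matrix (Fin n) (Fin n) ℂ}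
    (hX : X ∈ blockAlg n l) : phi0 n X ∈ blockAlg n l.reverse := by
  intro i j h
  rw [phi0_apply]
  apply hX
  have hi := blockIdx_rev_fin hls (Fin.rev i)
  have hj := blockIdx_rev_fin hls (Fin.rev j)
  rw [Fin.rev_rev] at hi hj
  have h1 : blockIdx l ((Fin.rev i : Fin n) : ℕ) < l.length :=
    blockIdx_lt_length hls (Fin.rev i).isLt
  have h2 : blockIdx l ((Fin.rev j : Fin n) : ℕ) < l.length :=
    blockIdx_lt_length hls (Fin.rev j).isLt
  omega

end


section
variable {n : ℕ}

-- mul with std basis matrices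
lemma mul_stdBasis_apply (x : Matrix (Fin n) (Fin n) ℂ) (r c a b : Fin n) :
    (x * Matrix.single r c (1:ℂ)) a b = if b = c then x a r else 0 := by
  rw [Matrix.mul_apply]
  rw [Finset.sum_eq_single r]
  · simp [Matrix.single, eq_comm]
  · intro d _ hd
    simp [Matrix.single, hd, Ne.symm hd]
  · simp

lemma stdBasis_mul_apply (x : Matrix (Fin n) (Fin n) ℂ) (r c a b : Fin n) :
    (Matrix.single r c (1:ℂ) * x) a b = if a = r then x c b else 0 := by
  rw [Matrix.mul_apply]
  rw [Finset.sum_eq_single c]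
  · simp [Matrix.single, eq_comm]
  · intro d _ hd
    simp [Matrix.single, hd, Ne.symm hd]
  · simp
end

section
variable {n : ℕ}

def Nset (n : ℕ) (S : Set (Matrix (Fin n) (Fin n) ℂ)) : Set (Matrix (Fin n) (Fin n) ℂ) :=
  {x | x ∈ S ∧ ∀ a ∈ S, (x * a)^n = 0 ∧ (a * x)^n = 0}

def LAnn (n : ℕ) (S : Set (Matrix (Fin n) (Fin n) ℂ)) : ℕ → Set (Matrix (Fin n) (Fin n) ℂ)
  | 0 => {0}
  | m+1 => {x | x ∈ S ∧ ∀ r ∈ Nset n S, r * x ∈ LAnn n S m}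

def RAnn (n : ℕ) (S : Set (Matrix (Fin n) (Fin n) ℂ)) : ℕ → Set (Matrix (Fin n) (Fin n) ℂ)
  | 0 => {0}
  | m+1 => {x | x ∈ S ∧ ∀ r ∈ Nset n S, x * r ∈ RAnn n S m}

/-- the strictly block-upper-triangular matrices -/
def strictB (n : ℕ) (k : List ℕ) : Set (Matrix (Fin n) (Fin n) ℂ) :=
  {x | ∀ i j : Fin n, blockIdx k (j : ℕ) ≤ blockIdx k (i : ℕ) → x i j = 0}

lemma strictB_subset (k : List ℕ) : strictB n k ⊆ blockAlg n k :=
  fun x hx i j h => hx i j (le_of_lt h)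

lemma strictB_mul_right {k : List ℕ} {x y : Matrix (Fin n) (Fin n) ℂ}
    (hy : y ∈ strictB n k) (hx : x ∈ blockAlg n k) : y * x ∈ strictB n k := by
  intro i j h
  rw [Matrix.mul_apply]
  apply Finset.sum_eq_zero
  intro c _
  rcases le_or_gt (blockIdx k (c : ℕ)) (blockIdx k (i : ℕ)) with hc | hc
  · rw [hy i c hc, zero_mul]
  · rw [hx c j (by omega), mul_zero]

lemma strictB_mul_left {k : List ℕ} {x y : Matrix (Fin n) (Fin n) ℂ}
    (hy : y ∈ strictB n k) (hx : x ∈ blockAlg n k) : x * y ∈ strictB n k := by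
  intro i j h
  rw [Matrix.mul_apply]
  apply Finset.sum_eq_zero
  intro c _
  rcases Nat.lt_or_ge (blockIdx k (c : ℕ)) (blockIdx k (i : ℕ)) with hc | hc
  · rw [hx i c hc, zero_mul]
  · rw [hy c j (by omega), mul_zero]

lemma strictB_pow_off {k : List ℕ} {y : Matrix (Fin n) (Fin n) ℂ}
    (hy : y ∈ strictB n k) : ∀ m : ℕ, ∀ i j : Fin n,
      blockIdx k (j : ℕ) < blockIdx k (i : ℕ) + m → (y ^ m) i j = 0 := by
  intro m
  induction m with
  | zero =>
    intro i j h
    simp only [Nat.add_zero] at h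
    rw [pow_zero]
    exact Matrix.one_apply_ne' (by intro hij; rw [hij] at h; omega)
  | succ m ih =>
    intro i j h
    rw [pow_succ, Matrix.mul_apply]
    apply Finset.sum_eq_zero
    intro c _
    rcases Nat.lt_or_ge (blockIdx k (c : ℕ)) (blockIdx k (i : ℕ) + m) with hc | hc
    · rw [ih i c hc, zero_mul]
    · rw [hy c j (by omega), mul_zero]

lemma strictB_pow_eq_zero {k : List ℕ} (hk : ∀ m ∈ k, 0 < m) (hks : k.sum = n)
    {y : Matrix (Fin n) (Fin n) ℂ} (hy : y ∈ strictB n k) : y ^ n = 0 := by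
  ext i j
  rw [Matrix.zero_apply]
  apply strictB_pow_off hy n i j
  have h1 : blockIdx k (j : ℕ) < k.length := blockIdx_lt_length hks j.isLt
  have h2 : k.length ≤ n := by rw [← hks]; exact length_le_sum hk
  omega

lemma Nset_blockAlg {k : List ℕ} (hk : ∀ m ∈ k, 0 < m) (hks : k.sum = n) (hn : 0 < n) :
    Nset n (blockAlg n k) = strictB n k := by
  apply Set.Subset.antisymm
  · rintro x ⟨hxA, hx⟩
    intro i j hij
    by_contra hne
    -- use a = E_{j i}
    have haA : Matrix.single j i (1:ℂ) ∈ blockAlg n k := by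
      intro a b hab
      simp only [Matrix.single, Matrix.of_apply, ite_eq_right_iff, and_imp]
      intro h1 h2
      rw [← h1, ← h2] at hab
      omega
    set y := x * Matrix.single j i (1:ℂ) with hydef
    have hyapp : ∀ a b : Fin n, y a b = if b = i then x a j else 0 := fun a b =>
      mul_stdBasis_apply x j i a b
    have hsq : y * y = x i j • y := by
      ext a b
      rw [Matrix.mul_apply, Matrix.smul_apply]
      rw [Finset.sum_eq_single i]
      · rw [hyapp a i, hyapp i b, hyapp a b]
        by_cases hb : b = i <;> simp [hb, mul_comm]
      · intro c _ hc
        rw [hyapp a c, if_neg hc, zero_mul]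
      · simp
    have hpow : ∀ m : ℕ, y ^ (m + 1) = (x i j) ^ m • y := by
      intro m
      induction m with
      | zero => simp
      | succ m ih =>
        rw [pow_succ, ih, Matrix.smul_mul, hsq, smul_smul, pow_succ]
    have hzero := (hx _ haA).1
    rw [← hydef] at hzero
    have hn1 : n = (n - 1) + 1 := by omega
    have hzero2 : y ^ (n - 1 + 1) = 0 := by rw [← hn1]; exact hzero
    rw [hpow (n-1)] at hzero2
    have : ((x i j) ^ (n-1) • y) i i = 0 := by rw [hzero2]; rfl
    rw [Matrix.smul_apply, hyapp i i, if_pos rfl, smul_eq_mul] at this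
    have : (x i j) ^ (n - 1) = 0 ∨ x i j = 0 := mul_eq_zero.mp this
    rcases this with h | h
    · rcases Nat.eq_zero_or_pos (n-1) with h0 | h0
      · rw [h0, pow_zero] at h; exact one_ne_zero h
      · exact hne (pow_eq_zero_iff (by omega) |>.mp h)
    · exact hne h
  · intro y hy
    refine ⟨strictB_subset k hy, fun a ha => ⟨?_, ?_⟩⟩
    · exact strictB_pow_eq_zero hk hks (strictB_mul_right hy ha)
    · exact strictB_pow_eq_zero hk hks (strictB_mul_left hy ha)

lemma LAnn_blockAlg {k : List ℕ} (hk : ∀ m ∈ k, 0 < m) (hks : k.sum = n) (hn : 0 < n) :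
    ∀ m : ℕ, LAnn n (blockAlg n k) m =
      {x | x ∈ blockAlg n k ∧ ∀ i j : Fin n, m ≤ blockIdx k (i : ℕ) → x i j = 0} := by
  intro m
  induction m with
  | zero =>
    apply Set.Subset.antisymm
    · rintro x rfl
      exact ⟨fun i j _ => rfl, fun i j _ => rfl⟩
    · rintro x ⟨_, hx⟩
      have : x = 0 := by ext i j; exact hx i j (Nat.zero_le _)
      simp [LAnn, this]
    -- simp [LAnn]
  | succ m ih =>
    rw [show LAnn n (blockAlg n k) (m+1) =
      {x | x ∈ blockAlg n k ∧ ∀ r ∈ Nset n (blockAlg n k),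
        r * x ∈ LAnn n (blockAlg n k) m} from rfl]
    rw [Nset_blockAlg hk hks hn, ih]
    apply Set.Subset.antisymm
    · rintro x ⟨hxA, hx⟩
      refine ⟨hxA, fun i j hij => ?_⟩
      -- pick i' the start of block (blockIdx i - 1)
      have hbi : blockIdx k (i : ℕ) < k.length := blockIdx_lt_length hks i.isLt
      have hb1 : blockIdx k (i : ℕ) - 1 < k.length := by omega
      have hstart : (k.take (blockIdx k (i:ℕ) - 1)).sum < n := by
        have h5 : (k.take (blockIdx k (i:ℕ) - 1 + 1)).sum =
            (k.take (blockIdx k (i:ℕ) - 1)).sum + k[blockIdx k (i:ℕ) - 1] :=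
          List.sum_take_succ k _ hb1
        have h6 : 0 < k[blockIdx k (i:ℕ) - 1] := hk _ (List.getElem_mem hb1)
        have h7 : (k.take (blockIdx k (i:ℕ) - 1 + 1)).sum ≤ k.sum := sum_take_le _ _
        omega
      set i' : Fin n := ⟨(k.take (blockIdx k (i:ℕ) - 1)).sum, hstart⟩ with hi'def
      have hbi' : blockIdx k (i' : ℕ) = blockIdx k (i : ℕ) - 1 := blockIdx_blockStart hk hb1
      have hrstrict : Matrix.single i' i (1:ℂ) ∈ strictB n k := by
        intro a b hab
        simp only [Matrix.single, Matrix.of_apply, ite_eq_right_iff, and_imp]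
        intro h1 h2
        rw [← h1, ← h2] at hab
        omega
      have := ((hx _ hrstrict).2) i' j (by omega)
      rw [stdBasis_mul_apply, if_pos rfl] at this
      exact this
    · rintro x ⟨hxA, hx⟩
      refine ⟨hxA, fun r hr => ⟨blockAlg_mul (strictB_subset k hr) hxA, fun i j hij => ?_⟩⟩
      rw [Matrix.mul_apply]
      apply Finset.sum_eq_zero
      intro c _
      rcases le_or_gt (blockIdx k (c : ℕ)) (blockIdx k (i : ℕ)) with hc | hc
      · rw [hr i c hc, zero_mul]
      · rw [hx c j (by omega), mul_zero]
end

section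
variable {n : ℕ}

lemma LAnn_subset {S : Set (Matrix (Fin n) (Fin n) ℂ)} (h0 : 0 ∈ S) :
    ∀ m, LAnn n S m ⊆ S
  | 0 => by rintro x rfl; exact h0
  | m+1 => fun x hx => hx.1

section transport
variable {A B : Set (Matrix (Fin n) (Fin n) ℂ)} {φ : Matrix (Fin n) (Fin n) ℂ → Matrix (Fin n) (Fin n) ℂ}
  (hn : 0 < n) (h0A : (0 : Matrix (Fin n) (Fin n) ℂ) ∈ A)
  (hmulA : ∀ x ∈ A, ∀ y ∈ A, x * y ∈ A)
  (hbij : Set.BijOn φ A B)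
  (hadd : ∀ X ∈ A, ∀ Y ∈ A, φ (X + Y) = φ X + φ Y)
  (hmul : ∀ X ∈ A, ∀ Y ∈ A, φ (X * Y) = φ Y * φ X)

include hadd h0A in
lemma phi_zero : φ 0 = 0 := by
  have := hadd 0 h0A 0 h0A
  rw [add_zero] at this
  exact (left_eq_add.mp this)

include hmulA in
lemma pow_memA : ∀ x ∈ A, ∀ m : ℕ, x ^ (m+1) ∈ A := by
  intro x hx m
  induction m with
  | zero => simpa using hx
  | succ m ih => rw [pow_succ]; exact hmulA _ ih _ hx

include hmulA hmul in
lemma phi_pow : ∀ x ∈ A, ∀ m : ℕ, φ (x ^ (m+1)) = (φ x) ^ (m+1) := by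
  intro x hx m
  induction m with
  | zero => simp
  | succ m ih =>
    rw [pow_succ, hmul _ (pow_memA hmulA x hx m) _ hx, ih, ← pow_succ']

include hn h0A hmulA hbij hadd hmul in
lemma phi_Nset_mapsTo : ∀ x ∈ Nset n A, φ x ∈ Nset n B := by
  rintro x ⟨hxA, hx⟩
  refine ⟨hbij.mapsTo hxA, fun b hb => ?_⟩
  obtain ⟨a, haA, rfl⟩ := hbij.surjOn hb
  have hax : a * x ∈ A := hmulA _ haA _ hxA
  have hxa : x * a ∈ A := hmulA _ hxA _ haA
  have hn1 : n = (n-1) + 1 := by omega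
  constructor
  · have : (φ x * φ a) ^ ((n-1)+1) = φ ((a * x) ^ ((n-1)+1)) := by
      rw [phi_pow hmulA hmul _ hax, hmul _ haA _ hxA]
    rw [← hn1] at this
    rw [this, (hx a haA).2, phi_zero h0A hadd]
  · have : (φ a * φ x) ^ ((n-1)+1) = φ ((x * a) ^ ((n-1)+1)) := by
      rw [phi_pow hmulA hmul _ hxa, hmul _ hxA _ haA]
    rw [← hn1] at this
    rw [this, (hx a haA).1, phi_zero h0A hadd]

include hn h0A hmulA hbij hadd hmul in
lemma phi_Nset_surj : ∀ y ∈ Nset n B, ∃ x ∈ Nset n A, φ x = y := by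
  rintro y ⟨hyB, hy⟩
  obtain ⟨x, hxA, rfl⟩ := hbij.surjOn hyB
  refine ⟨x, ⟨hxA, fun a haA => ?_⟩, rfl⟩
  have hn1 : n = (n-1) + 1 := by omega
  have hinj := hbij.injOn
  constructor
  · have h1 : φ ((x * a) ^ ((n-1)+1)) = (φ a * φ x) ^ ((n-1)+1) := by
      rw [phi_pow hmulA hmul _ (hmulA _ hxA _ haA), hmul _ hxA _ haA]
    have h2 : (φ a * φ x) ^ n = 0 := (hy _ (hbij.mapsTo haA)).2
    rw [Nat.sub_add_cancel hn] at h1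
    rw [← h1] at h2
    have hmem : (x * a) ^ n ∈ A := by
      have := pow_memA hmulA _ (hmulA _ hxA _ haA) (n-1)
      rwa [Nat.sub_add_cancel hn] at this
    exact hinj hmem h0A (by rw [h2, phi_zero h0A hadd])
  · have h1 : φ ((a * x) ^ ((n-1)+1)) = (φ x * φ a) ^ ((n-1)+1) := by
      rw [phi_pow hmulA hmul _ (hmulA _ haA _ hxA), hmul _ haA _ hxA]
    have h2 : (φ x * φ a) ^ n = 0 := (hy _ (hbij.mapsTo haA)).1
    rw [Nat.sub_add_cancel hn] at h1
    rw [← h1] at h2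
    have hmem : (a * x) ^ n ∈ A := by
      have := pow_memA hmulA _ (hmulA _ haA _ hxA) (n-1)
      rwa [Nat.sub_add_cancel hn] at this
    exact hinj hmem h0A (by rw [h2, phi_zero h0A hadd])

include hn h0A hmulA hbij hadd hmul in
lemma phi_LAnn : ∀ m, φ '' (LAnn n A m) = RAnn n B m := by
  intro m
  induction m with
  | zero =>
    rw [show LAnn n A 0 = {0} from rfl, show RAnn n B 0 = {0} from rfl]
    rw [Set.image_singleton, phi_zero h0A hadd]
  | succ m ih =>
    apply Set.Subset.antisymm
    · rintro _ ⟨x, ⟨hxA, hx⟩, rfl⟩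
      refine ⟨hbij.mapsTo hxA, fun s hs => ?_⟩
      obtain ⟨r, hrN, rfl⟩ := phi_Nset_surj hn h0A hmulA hbij hadd hmul s hs
      rw [← hmul _ hrN.1 _ hxA]
      rw [← ih]
      exact ⟨r * x, hx r hrN, rfl⟩
    · rintro y ⟨hyB, hy⟩
      obtain ⟨x, hxA, rfl⟩ := hbij.surjOn hyB
      refine ⟨x, ⟨hxA, fun r hrN => ?_⟩, rfl⟩
      have h1 : φ x * φ r ∈ RAnn n B m := hy _ (phi_Nset_mapsTo hn h0A hmulA hbij hadd hmul r hrN)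
      rw [← hmul _ hrN.1 _ hxA, ← ih] at h1
      obtain ⟨u, huL, hueq⟩ := h1
      have huA : u ∈ A := LAnn_subset h0A m huL
      have : u = r * x := hbij.injOn huA (hmulA _ hrN.1 _ hxA) hueq
      rw [← this]
      exact huL
end transport
end

section
variable {n : ℕ}

def supM (n : ℕ) (P : Fin n → Fin n → Prop) : Submodule ℂ (Matrix (Fin n) (Fin n) ℂ) where
  carrier := {X | ∀ i j : Fin n, ¬ P i j → X i j = 0}
  add_mem' := by
    intro X Y hX hY i j h
    simp [Matrix.add_apply, hX i j h, hY i j h]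
  zero_mem' := fun i j _ => rfl
  smul_mem' := by
    intro c X hX i j h
    simp [Matrix.smul_apply, hX i j h]

def supMEquiv (n : ℕ) (P : Fin n → Fin n → Prop) [∀ i j, Decidable (P i j)] :
    supM n P ≃ₗ[ℂ] ({q : Fin n × Fin n // P q.1 q.2} → ℂ) where
  toFun X := fun q => (X : Matrix (Fin n) (Fin n) ℂ) q.1.1 q.1.2
  map_add' := fun X Y => rfl
  map_smul' := fun c X => rfl
  invFun g := ⟨Matrix.of fun i j => if h : P i j then g ⟨(i, j), h⟩ else 0, by
    intro i j h
    simp [Matrix.of_apply, h]⟩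
  left_inv := by
    intro X
    apply Subtype.ext
    ext i j
    by_cases h : P i j
    · simp [Matrix.of_apply, h]
    · simp [Matrix.of_apply, h, X.2 i j h]
  right_inv := by
    intro g
    funext q
    simp [Matrix.of_apply, q.2]

lemma finrank_supM (n : ℕ) (P : Fin n → Fin n → Prop) [∀ i j, Decidable (P i j)] :
    Module.finrank ℂ (supM n P) = Fintype.card {q : Fin n × Fin n // P q.1 q.2} := by
  rw [(supMEquiv n P).finrank_eq, Module.finrank_pi]

def cnt (n : ℕ) (k : List ℕ) (m : ℕ) : ℕ :=
  ((Finset.range n ×ˢ Finset.range n).filter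
    (fun p => blockIdx k p.1 ≤ blockIdx k p.2 ∧ blockIdx k p.1 < m)).card

lemma card_subtype_cnt (k : List ℕ) (m : ℕ) :
    Fintype.card {q : Fin n × Fin n //
      blockIdx k (q.1 : ℕ) ≤ blockIdx k (q.2 : ℕ) ∧ blockIdx k (q.1 : ℕ) < m} = cnt n k m := by
  rw [Fintype.card_subtype, cnt]
  have himg : ((Finset.range n ×ˢ Finset.range n).filter
      (fun p => blockIdx k p.1 ≤ blockIdx k p.2 ∧ blockIdx k p.1 < m)) =
      Finset.image (fun q : Fin n × Fin n => ((q.1 : ℕ), (q.2 : ℕ)))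
        (Finset.univ.filter (fun q : Fin n × Fin n =>
          blockIdx k (q.1 : ℕ) ≤ blockIdx k (q.2 : ℕ) ∧ blockIdx k (q.1 : ℕ) < m)) := by
    apply Finset.ext
    rintro ⟨a, b⟩
    simp only [Finset.mem_filter, Finset.mem_product, Finset.mem_range, Finset.mem_image,
      Finset.mem_univ, true_and, Prod.ext_iff]
    constructor
    · rintro ⟨⟨ha, hb⟩, hP⟩
      exact ⟨(⟨a, ha⟩, ⟨b, hb⟩), hP, rfl, rfl⟩
    · rintro ⟨⟨q1, q2⟩, hP, h1, h2⟩
      subst h1; subst h2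
      exact ⟨⟨q1.isLt, q2.isLt⟩, hP⟩
  rw [himg, Finset.card_image_of_injective]
  intro q q' h
  simp only [Prod.ext_iff, Fin.val_eq_val] at h ⊢
  exact h
end


lemma cnt_one {n a : ℕ} {t : List ℕ} (hsum : a + t.sum = n) :
    cnt n (a :: t) 1 = a * n := by
  have hfe : ((Finset.range n ×ˢ Finset.range n).filter
      (fun p => blockIdx (a::t) p.1 ≤ blockIdx (a::t) p.2 ∧ blockIdx (a::t) p.1 < 1)) =
      Finset.range a ×ˢ Finset.range n := by
    apply Finset.ext
    rintro ⟨i, j⟩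
    simp only [Finset.mem_filter, Finset.mem_product, Finset.mem_range]
    constructor
    · rintro ⟨⟨hi, hj⟩, hle, hlt⟩
      refine ⟨?_, hj⟩
      by_contra hia
      push_neg at hia
      rw [blockIdx_cons hia (by omega)] at hlt
      omega
    · rintro ⟨hi, hj⟩
      rw [blockIdx_cons_lt hi]
      exact ⟨⟨by omega, hj⟩, by omega, by omega⟩
  rw [cnt, hfe, Finset.card_product, Finset.card_range, Finset.card_range]

lemma cnt_cons_succ {n a : ℕ} {t : List ℕ} (hsum : a + t.sum = n) (m : ℕ) :
    cnt n (a :: t) (m + 1) = a * n + cnt (n - a) t m := by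
  classical
  set P : ℕ × ℕ → Prop := fun p => blockIdx (a::t) p.1 ≤ blockIdx (a::t) p.2 ∧ blockIdx (a::t) p.1 < m + 1 with hP
  set S := (Finset.range n ×ˢ Finset.range n).filter P with hS
  have hsplit : (S.filter (fun p => p.1 < a)).card + (S.filter (fun p => ¬ p.1 < a)).card = S.card :=
    Finset.card_filter_add_card_filter_not _
  have h1 : S.filter (fun p => p.1 < a) = Finset.range a ×ˢ Finset.range n := by
    apply Finset.ext
    rintro ⟨i, j⟩
    simp only [hS, hP, Finset.mem_filter, Finset.mem_product, Finset.mem_range]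
    constructor
    · rintro ⟨⟨⟨hi, hj⟩, _⟩, hia⟩
      exact ⟨hia, hj⟩
    · rintro ⟨hia, hj⟩
      rw [blockIdx_cons_lt hia]
      exact ⟨⟨⟨by omega, hj⟩, by omega, by omega⟩, hia⟩
  have h2 : S.filter (fun p => ¬ p.1 < a) =
      Finset.image (fun p : ℕ × ℕ => (p.1 + a, p.2 + a))
        (((Finset.range (n-a) ×ˢ Finset.range (n-a)).filter
          (fun p => blockIdx t p.1 ≤ blockIdx t p.2 ∧ blockIdx t p.1 < m))) := by
    apply Finset.ext
    rintro ⟨i, j⟩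
    simp only [hS, hP, Finset.mem_filter, Finset.mem_product, Finset.mem_range,
      Finset.mem_image, Prod.ext_iff]
    constructor
    · rintro ⟨⟨⟨hi, hj⟩, hle, hlt⟩, hia⟩
      push_neg at hia
      have hbi := blockIdx_cons (t := t) hia (by omega)
      have hja : a ≤ j := by
        by_contra hja
        push_neg at hja
        rw [blockIdx_cons_lt hja, hbi] at hle
        omega
      have hbj := blockIdx_cons (t := t) hja (by omega)
      refine ⟨(i - a, j - a), ⟨⟨by omega, by omega⟩, ?_, ?_⟩, by omega, by omega⟩
      · dsimp only
        rw [hbi, hbj] at hle; omega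
      · dsimp only
        rw [hbi] at hlt; omega
    · rintro ⟨⟨i', j'⟩, ⟨⟨hi', hj'⟩, hle, hlt⟩, hieq, hjeq⟩
      subst hieq; subst hjeq
      have hbi := blockIdx_cons (a := a) (t := t) (i := i' + a) (by omega) (by omega)
      have hbj := blockIdx_cons (a := a) (t := t) (i := j' + a) (by omega) (by omega)
      simp only [Nat.add_sub_cancel] at hbi hbj
      refine ⟨⟨⟨by omega, by omega⟩, ?_, ?_⟩, by omega⟩
      · dsimp only at hle ⊢
        rw [hbi, hbj]; omega
      · dsimp only at hlt ⊢
        rw [hbi]; omega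
  have hinj : Function.Injective (fun p : ℕ × ℕ => (p.1 + a, p.2 + a)) := by
    rintro ⟨x1, x2⟩ ⟨y1, y2⟩ h
    simp only [Prod.ext_iff] at h ⊢
    omega
  rw [cnt, ← hS, ← hsplit, h1, h2, Finset.card_image_of_injective _ hinj,
    Finset.card_product, Finset.card_range, Finset.card_range, cnt]

lemma pos_sum_zero {k : List ℕ} (hk : ∀ m ∈ k, 0 < m) (h : k.sum = 0) : k = [] := by
  cases k with
  | nil => rfl
  | cons a t =>
    have := hk a (by simp)
    simp only [List.sum_cons] at h
    omega

lemma cnt_inj : ∀ (k : List ℕ) {n : ℕ} (k' : List ℕ), (∀ m ∈ k, 0 < m) → (∀ m ∈ k', 0 < m) →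
    k.sum = n → k'.sum = n → (∀ m, cnt n k m = cnt n k' m) → k = k' := by
  intro k
  induction k with
  | nil =>
    intro n k' _ hk' hs hs' _
    simp only [List.sum_nil] at hs
    exact (pos_sum_zero hk' (by omega)).symm
  | cons a t ih =>
    intro n k' hk hk' hs hs' hcnt
    have ha : 0 < a := hk a (by simp)
    simp only [List.sum_cons] at hs
    cases k' with
    | nil =>
      simp only [List.sum_nil] at hs'
      omega
    | cons b t' =>
      simp only [List.sum_cons] at hs'
      have h1 := hcnt 1
      rw [cnt_one hs, cnt_one hs'] at h1
      have hab : a = b := by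
        have hn : 0 < n := by omega
        exact Nat.eq_of_mul_eq_mul_right hn h1
      subst hab
      have htt : t = t' := by
        apply ih t' (fun m hm => hk m (by simp [hm])) (fun m hm => hk' m (by simp [hm]))
          rfl (by omega)
        intro m
        have := hcnt (m + 1)
        rw [cnt_cons_succ hs m, cnt_cons_succ hs' m] at this
        have ht : t.sum = n - a := by omega
        rw [ht]
        omega
      rw [htt]


section Main
variable {n : ℕ}

lemma LAnn_eq_supM {k : List ℕ} (hk : ∀ m ∈ k, 0 < m) (hks : k.sum = n) (hn : 0 < n)
    (m : ℕ) : LAnn n (blockAlg n k) m =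
      (supM n (fun i j : Fin n => blockIdx k (i:ℕ) ≤ blockIdx k (j:ℕ) ∧ blockIdx k (i:ℕ) < m) :
        Set (Matrix (Fin n) (Fin n) ℂ)) := by
  rw [LAnn_blockAlg hk hks hn m]
  apply Set.ext
  intro x
  constructor
  · rintro ⟨hA, hrow⟩ i j hP
    rcases Nat.lt_or_ge (blockIdx k (j:ℕ)) (blockIdx k (i:ℕ)) with hc | hc
    · exact hA i j hc
    · apply hrow i j
      by_contra hcon
      push_neg at hcon
      exact hP ⟨hc, by omega⟩
  · intro hsup
    exact ⟨fun i j h => hsup i j (fun hP => by omega),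
      fun i j h => hsup i j (fun hP => by omega)⟩

lemma phi0_bijOn {l : List ℕ} (hls : l.sum = n) :
    Set.BijOn (phi0 n) (blockAlg n l.reverse) (blockAlg n l) := by
  have hrev_sum : l.reverse.sum = n := by rw [List.sum_reverse]; exact hls
  have h1 : Set.MapsTo (phi0 n) (blockAlg n l.reverse) (blockAlg n l) := by
    intro x hx
    have := phi0_mapsTo hrev_sum hx
    rwa [List.reverse_reverse] at this
  have h2 : Set.MapsTo (phi0 n) (blockAlg n l) (blockAlg n l.reverse) :=
    fun x hx => phi0_mapsTo hls hx
  exact Set.InvOn.bijOn ⟨fun x _ => phi0_phi0 x, fun x _ => phi0_phi0 x⟩ h1 h2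
end Main

theorem blockAlg_antiiso_iff {n : ℕ} (k l : List ℕ)
    (hk : ∀ m ∈ k, 0 < m) (hl : ∀ m ∈ l, 0 < m)
    (hks : k.sum = n) (hls : l.sum = n) :
    (∃ φ : Matrix (Fin n) (Fin n) ℂ → Matrix (Fin n) (Fin n) ℂ,
      Set.BijOn φ (blockAlg n k) (blockAlg n l) ∧
      (∀ X ∈ blockAlg n k, ∀ Y ∈ blockAlg n k, φ (X + Y) = φ X + φ Y) ∧
      (∀ (c : ℂ), ∀ X ∈ blockAlg n k, φ (c • X) = c • φ X) ∧
      (∀ X ∈ blockAlg n k, ∀ Y ∈ blockAlg n k, φ (X * Y) = φ Y * φ X)) ↔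
    k = l.reverse := by
  constructor
  · rintro ⟨φ, hbij, hadd, hsmul, hmul⟩
    rcases Nat.eq_zero_or_pos n with hn0 | hn
    · have hk0 : k = [] := pos_sum_zero hk (by omega)
      have hl0 : l = [] := pos_sum_zero hl (by omega)
      rw [hk0, hl0]
      rfl
    · have hrev_pos : ∀ m ∈ l.reverse, 0 < m := fun m hm => hl m (List.mem_reverse.mp hm)
      have hrev_sum : l.reverse.sum = n := by rw [List.sum_reverse]; exact hls
      apply cnt_inj k l.reverse hk hrev_pos hks hrev_sum
      intro m
      have hbij0 := phi0_bijOn (n := n) hls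
      have T1 : φ '' (LAnn n (blockAlg n k) m) = RAnn n (blockAlg n l) m :=
        phi_LAnn hn (blockAlg_zero k) (fun x hx y hy => blockAlg_mul hx hy) hbij hadd hmul m
      have T2 : phi0 n '' (LAnn n (blockAlg n l.reverse) m) = RAnn n (blockAlg n l) m :=
        phi_LAnn hn (blockAlg_zero _) (fun x hx y hy => blockAlg_mul hx hy) hbij0
          (fun X _ Y _ => phi0_add X Y) (fun X _ Y _ => phi0_mul X Y) m
      have CU := LAnn_eq_supM hk hks hn m
      have CV := LAnn_eq_supM hrev_pos hrev_sum hn m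
      set U := supM n (fun i j : Fin n =>
        blockIdx k (i:ℕ) ≤ blockIdx k (j:ℕ) ∧ blockIdx k (i:ℕ) < m) with hUdef
      set V := supM n (fun i j : Fin n =>
        blockIdx l.reverse (i:ℕ) ≤ blockIdx l.reverse (j:ℕ) ∧ blockIdx l.reverse (i:ℕ) < m)
        with hVdef
      have himg : φ '' (U : Set (Matrix (Fin n) (Fin n) ℂ)) =
          phi0 n '' (V : Set (Matrix (Fin n) (Fin n) ℂ)) := by
        rw [← CU, ← CV, T1, T2]
      have hUA : (U : Set (Matrix (Fin n) (Fin n) ℂ)) ⊆ blockAlg n k := by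
        rw [← CU]
        exact LAnn_subset (blockAlg_zero k) m
      have hphi0inj : Function.Injective (phi0 n) :=
        Function.Involutive.injective (fun X => phi0_phi0 X)
      have hmemV : ∀ u : U, phi0 n (φ (u : Matrix (Fin n) (Fin n) ℂ)) ∈ V := by
        intro u
        have h1 : φ ↑u ∈ φ '' (U : Set (Matrix (Fin n) (Fin n) ℂ)) :=
          Set.mem_image_of_mem φ u.2
        rw [himg] at h1
        obtain ⟨v, hv, hveq⟩ := h1
        rw [← hveq, phi0_phi0]
        exact hv
      let ψ : U →ₗ[ℂ] V :=
        { toFun := fun u => ⟨phi0 n (φ ↑u), hmemV u⟩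
          map_add' := by
            intro u v
            apply Subtype.ext
            show phi0 n (φ (↑u + ↑v)) = phi0 n (φ ↑u) + phi0 n (φ ↑v)
            rw [hadd ↑u (hUA u.2) ↑v (hUA v.2), phi0_add]
          map_smul' := by
            intro c u
            apply Subtype.ext
            show phi0 n (φ (c • ↑u)) = c • phi0 n (φ ↑u)
            rw [hsmul c ↑u (hUA u.2), phi0_smul] }
      have hψbij : Function.Bijective ψ := by
        constructor
        · intro u u' h
          have h1 : phi0 n (φ ↑u) = phi0 n (φ ↑u') := congrArg Subtype.val h
          have h2 : φ ↑u = φ ↑u' := hphi0inj h1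
          exact Subtype.ext (hbij.injOn (hUA u.2) (hUA u'.2) h2)
        · intro v
          have h1 : phi0 n ↑v ∈ phi0 n '' (V : Set (Matrix (Fin n) (Fin n) ℂ)) :=
            Set.mem_image_of_mem _ v.2
          rw [← himg] at h1
          obtain ⟨u, hu, hueq⟩ := h1
          refine ⟨⟨u, hu⟩, Subtype.ext ?_⟩
          show phi0 n (φ u) = ↑v
          rw [hueq, phi0_phi0]
      have hrank : Module.finrank ℂ U = Module.finrank ℂ V :=
        (LinearEquiv.ofBijective ψ hψbij).finrank_eq
      have c1 : Module.finrank ℂ U = cnt n k m := by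
        rw [hUdef, finrank_supM]
        exact card_subtype_cnt k m
      have c2 : Module.finrank ℂ V = cnt n l.reverse m := by
        rw [hVdef, finrank_supM]
        exact card_subtype_cnt l.reverse m
      rw [← c1, ← c2]
      exact hrank
  · intro hrev
    subst hrev
    exact ⟨phi0 n, phi0_bijOn hls, fun X _ Y _ => phi0_add X Y,
      fun c X _ => phi0_smul c X, fun X _ Y _ => phi0_mul X Y⟩
end
end

section
/- Let A ⊆ M_n(ℂ) be a block upper-triangular subalgebra and let φ : A → M_n(ℂ) be a continuous map such that σ(A) ⊆ σ(φ(A)) for every matrix A in some subset U ⊆ A which is open in A (with the subspace topology). Then the characteristic polynomial of φ(A) equals the characteristic polynomial of A for every A ∈ U; in particular σ(φ(A)) = σ(A) for all A ∈ U. -/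
open Matrix

noncomputable section

namespace CharpolyAux

open Polynomial

variable {n : ℕ}

local notation "Mat" => Matrix (Fin n) (Fin n) ℂ

lemma eval_charpoly (M : Mat) (z : ℂ) :
    M.charpoly.eval z = Matrix.det (z • (1 : Mat) - M) := by
  have h : (Matrix.charmatrix M).map (Polynomial.evalRingHom z) = z • (1 : Mat) - M := by
    ext i j
    by_cases hij : i = j
    · subst hij
      simp [Matrix.charmatrix_apply_eq, Matrix.sub_apply, Matrix.smul_apply, Matrix.one_apply]
    · simp [Matrix.charmatrix_apply_ne _ _ _ hij, Matrix.sub_apply, Matrix.smul_apply,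
        Matrix.one_apply_ne hij]
  calc M.charpoly.eval z = (Polynomial.evalRingHom z) (Matrix.charmatrix M).det := rfl
    _ = ((Matrix.charmatrix M).map (Polynomial.evalRingHom z)).det := RingHom.map_det _ _
    _ = _ := by rw [h]

lemma mem_spectrum_iff_isRoot (M : Mat) (z : ℂ) :
    z ∈ spectrum ℂ M ↔ M.charpoly.IsRoot z := by
  rw [spectrum.mem_iff, Matrix.isUnit_iff_isUnit_det, isUnit_iff_ne_zero, not_ne_iff]
  have h : (algebraMap ℂ Mat z - M) = z • (1 : Mat) - M := by
    rw [Algebra.algebraMap_eq_smul_one]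
  rw [h, Polynomial.IsRoot, eval_charpoly]

lemma spectrum_eq_coe (M : Mat) : spectrum ℂ M = ↑(M.charpoly.roots.toFinset) := by
  ext z
  rw [mem_spectrum_iff_isRoot]
  simp [Polynomial.mem_roots', M.charpoly_monic.ne_zero]

lemma card_roots_charpoly (M : Mat) : Multiset.card M.charpoly.roots = n := by
  have hs : M.charpoly.Splits := IsAlgClosed.splits _
  rw [(Polynomial.splits_iff_card_roots).mp hs, Matrix.charpoly_natDegree_eq_dim,
    Fintype.card_fin]

lemma ncard_spectrum_of_nodup (M : Mat) (h : M.charpoly.roots.Nodup) :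
    (spectrum ℂ M).ncard = n := by
  rw [spectrum_eq_coe, Set.ncard_coe_finset, Multiset.toFinset_card_eq_card_iff_nodup.mpr h,
    card_roots_charpoly]

lemma ncard_spectrum_smul (M : Mat) (c : ℂ) (hc : c ≠ 0) :
    (spectrum ℂ (c • M)).ncard = (spectrum ℂ M).ncard := by
  have h : c • M = (Units.mk0 c hc) • M := rfl
  rw [h, spectrum.unit_smul_eq_smul, ← Set.image_smul,
    Set.ncard_image_of_injective _ (MulAction.injective (Units.mk0 c hc))]

lemma nodup_roots_of_det_ne_zero (M : Mat)
    (h : (Polynomial.aeval M M.charpoly.derivative).det ≠ 0) :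
    M.charpoly.roots.Nodup := by
  by_contra hnd
  rw [Multiset.nodup_iff_count_le_one] at hnd
  push_neg at hnd
  obtain ⟨a, ha⟩ := hnd
  have h2 : 2 ≤ M.charpoly.rootMultiplicity a := by
    rw [← Polynomial.count_roots]; omega
  have hdvd : (X - C a) ^ 2 ∣ M.charpoly :=
    dvd_trans (pow_dvd_pow _ h2) (Polynomial.pow_rootMultiplicity_dvd _ _)
  obtain ⟨g, hg⟩ := hdvd
  have hroot : a ∈ spectrum ℂ M := by
    rw [mem_spectrum_iff_isRoot, hg]
    simp [Polynomial.IsRoot]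
  have hder : M.charpoly.derivative.eval a = 0 := by
    rw [hg]
    simp [Polynomial.derivative_mul, Polynomial.derivative_pow]
  have h0 : (0 : ℂ) ∈ spectrum ℂ (Polynomial.aeval M M.charpoly.derivative) := by
    apply spectrum.subset_polynomial_aeval
    exact ⟨a, hroot, hder⟩
  rw [spectrum.zero_mem_iff] at h0
  exact h0 ((Matrix.isUnit_iff_isUnit_det _).mpr (isUnit_iff_ne_zero.mpr h))

/-- The matrix curve `t ↦ tA + D`, as a matrix of polynomials. -/
def curveMat (A D : Mat) : Matrix (Fin n) (Fin n) (Polynomial ℂ) :=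
  A.map (fun a => Polynomial.C a * Polynomial.X) + D.map Polynomial.C

/-- The "discriminant-like" polynomial `t ↦ det(p_t'(tA+D))` where `p_t` is the
characteristic polynomial of `tA + D`.  It vanishes exactly at those `t` where
`tA + D` has a repeated eigenvalue. -/
def discCurve (A D : Mat) : Polynomial ℂ :=
  (Polynomial.aeval (curveMat A D) (curveMat A D).charpoly.derivative).det

lemma curveMat_map (A D : Mat) (s : ℂ) :
    (curveMat A D).map (Polynomial.evalRingHom s) = s • A + D := by
  ext i j
  simp only [curveMat, Matrix.add_apply, Matrix.map_apply, Polynomial.coe_evalRingHom,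
    Polynomial.eval_add, Polynomial.eval_mul, Polynomial.eval_C, Polynomial.eval_X,
    Matrix.smul_apply, smul_eq_mul]
  ring

lemma comp_algebraMap (s : ℂ) :
    ((Polynomial.evalRingHom s).mapMatrix.comp
        (algebraMap (Polynomial ℂ) (Matrix (Fin n) (Fin n) (Polynomial ℂ))))
      = (algebraMap ℂ Mat).comp (Polynomial.evalRingHom s) := by
  refine RingHom.ext fun p => ?_
  ext i j
  simp only [RingHom.comp_apply, RingHom.mapMatrix_apply, Matrix.map_apply,
    Matrix.algebraMap_matrix_apply, apply_ite (Polynomial.evalRingHom s)]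
  split_ifs <;> simp

lemma eval_discCurve (A D : Mat) (s : ℂ) :
    (discCurve A D).eval s
      = (Polynomial.aeval (s • A + D) (s • A + D).charpoly.derivative).det := by
  classical
  set MX := curveMat A D with hMX
  set q := MX.charpoly.derivative with hq
  have h1 : (discCurve A D).eval s
      = ((Polynomial.aeval MX q).map (Polynomial.evalRingHom s)).det := by
    rw [discCurve]
    exact RingHom.map_det (Polynomial.evalRingHom s) _
  have h2 : (Polynomial.aeval MX q).map (Polynomial.evalRingHom s)
      = Polynomial.aeval (MX.map (Polynomial.evalRingHom s))
          (q.map (Polynomial.evalRingHom s)) := by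
    rw [Polynomial.aeval_def, Polynomial.aeval_def, ← RingHom.mapMatrix_apply,
      Polynomial.hom_eval₂, comp_algebraMap, ← Polynomial.eval₂_map,
      RingHom.mapMatrix_apply]
  have h3 : q.map (Polynomial.evalRingHom s)
      = ((MX.map (Polynomial.evalRingHom s)).charpoly).derivative := by
    rw [hq, Matrix.charpoly_map, Polynomial.derivative_map]
  rw [h1, h2, h3, curveMat_map]

lemma det_aeval_deriv_diagonal_ne_zero (hv : Function.Injective fun i : Fin n => ((i : ℕ) : ℂ)) :
    (Polynomial.aeval (Matrix.diagonal fun i : Fin n => ((i : ℕ) : ℂ))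
      ((Matrix.diagonal fun i : Fin n => ((i : ℕ) : ℂ)).charpoly.derivative)).det ≠ 0 := by
  classical
  set v : Fin n → ℂ := fun i => ((i : ℕ) : ℂ) with hvdef
  have hchar : (Matrix.diagonal v).charpoly = ∏ i, (X - C (v i)) := by
    rw [Matrix.charpoly_of_upperTriangular _ (Matrix.blockTriangular_diagonal v)]
    simp
  have hsep : (Matrix.diagonal v).charpoly.Separable := by
    rw [hchar]
    exact (Polynomial.separable_prod_X_sub_C_iff).mpr hv
  obtain ⟨a, b, hab⟩ := hsep
  have haeval : ∀ q : Polynomial ℂ, Polynomial.aeval (Matrix.diagonal v) q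
      = Matrix.diagonal fun i => q.eval (v i) := by
    intro q
    have h1 : Polynomial.aeval (Matrix.diagonalAlgHom ℂ v) q
        = Matrix.diagonalAlgHom ℂ (Polynomial.aeval v q) :=
      Polynomial.aeval_algHom_apply _ _ _
    have h2 : (Polynomial.aeval v q : Fin n → ℂ) = fun i => q.eval (v i) := by
      funext i
      rw [Polynomial.aeval_fn_apply]
      simp
    calc Polynomial.aeval (Matrix.diagonal v) q
        = Matrix.diagonalAlgHom ℂ (Polynomial.aeval v q) := h1
      _ = Matrix.diagonal fun i => q.eval (v i) := by rw [h2]; rfl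
  rw [haeval, Matrix.det_diagonal]
  rw [Finset.prod_ne_zero_iff]
  intro i _
  have hroot : (Matrix.diagonal v).charpoly.eval (v i) = 0 := by
    rw [hchar, Polynomial.eval_prod]
    exact Finset.prod_eq_zero (Finset.mem_univ i) (by simp)
  have := congrArg (Polynomial.eval (v i)) hab
  simp only [Polynomial.eval_add, Polynomial.eval_mul, Polynomial.eval_one, hroot,
    mul_zero, zero_add] at this
  intro hzero
  rw [hzero, mul_zero] at this
  exact zero_ne_one this

lemma charpoly_eq_of_subset (hn : 0 < n) (M₁ M₂ : Mat)
    (hB : (spectrum ℂ M₁).ncard = n) (hsub : spectrum ℂ M₁ ⊆ spectrum ℂ M₂) :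
    M₂.charpoly = M₁.charpoly := by
  classical
  have hfin : (spectrum ℂ M₁).Finite := by
    by_contra hinf
    rw [Set.Infinite.ncard hinf] at hB
    omega
  set F := hfin.toFinset with hF
  have hcard : F.card = n := by
    rw [← Set.ncard_coe_finset, hfin.coe_toFinset, hB]
  have key : ∀ p : Polynomial ℂ, p.Monic → p.natDegree = n →
      (∀ z ∈ F, p.IsRoot z) → p = (F.val.map fun z => X - C z).prod := by
    intro p hm hdeg hroots
    have hsplits : p.Splits := IsAlgClosed.splits _
    have hle : F.val ≤ p.roots := by
      rw [Multiset.le_iff_subset F.nodup]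
      intro z hz
      rw [Polynomial.mem_roots']
      exact ⟨hm.ne_zero, hroots z hz⟩
    have hcards : Multiset.card p.roots ≤ Multiset.card F.val := by
      rw [(Polynomial.splits_iff_card_roots).mp hsplits, hdeg]
      have : Multiset.card F.val = F.card := rfl
      omega
    have heq : F.val = p.roots := Multiset.eq_of_le_of_card_le hle hcards
    conv_lhs => rw [Polynomial.Splits.eq_prod_roots_of_monic hsplits hm]
    rw [← heq]
  have hdegC : M₂.charpoly.natDegree = n := by
    rw [Matrix.charpoly_natDegree_eq_dim, Fintype.card_fin]
  have hdegB : M₁.charpoly.natDegree = n := by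
    rw [Matrix.charpoly_natDegree_eq_dim, Fintype.card_fin]
  have hmemF : ∀ z ∈ F, z ∈ spectrum ℂ M₁ := by
    intro z hz
    rwa [hF, Set.Finite.mem_toFinset] at hz
  rw [key _ (Matrix.charpoly_monic M₂) hdegC
      (fun z hz => (mem_spectrum_iff_isRoot M₂ z).mp (hsub (hmemF z hz))),
    key _ (Matrix.charpoly_monic M₁) hdegB
      (fun z hz => (mem_spectrum_iff_isRoot M₁ z).mp (hmemF z hz))]

end CharpolyAux

open CharpolyAux Polynomial Topology Filter
theorem charpoly_preserved_on_open {n : ℕ} (𝒜 : Set (Matrix (Fin n) (Fin n) ℂ))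
    (h𝒜 : IsBlockUT n 𝒜)
    (φ : Matrix (Fin n) (Fin n) ℂ → Matrix (Fin n) (Fin n) ℂ)
    (hcont : ContinuousOn φ 𝒜)
    (U : Set (Matrix (Fin n) (Fin n) ℂ)) (hU𝒜 : U ⊆ 𝒜)
    (hUopen : ∃ V : Set (Matrix (Fin n) (Fin n) ℂ), IsOpen V ∧ U = V ∩ 𝒜)
    (hspec : ∀ A ∈ U, spectrum ℂ A ⊆ spectrum ℂ (φ A)) :
    ∀ A ∈ U, (φ A).charpoly = A.charpoly ∧ spectrum ℂ (φ A) = spectrum ℂ A := by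
  intro A hA
  rcases Nat.eq_zero_or_pos n with hn | hn
  · subst hn
    have hφA : φ A = A := by
      ext i j
      exact i.elim0
    rw [hφA]
    exact ⟨rfl, rfl⟩
  obtain ⟨k, -, -, hAlg⟩ := h𝒜
  obtain ⟨V, hVopen, hUV⟩ := hUopen
  set D : Matrix (Fin n) (Fin n) ℂ := Matrix.diagonal fun i : Fin n => ((i : ℕ) : ℂ) with hD
  have hvinj : Function.Injective fun i : Fin n => ((i : ℕ) : ℂ) := by
    intro i j hij
    exact Fin.val_injective (Nat.cast_injective hij)
  have hmem𝒜 : ∀ t : ℂ, A + t • D ∈ 𝒜 := by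
    intro t
    have hA𝒜 : A ∈ blockAlg n k := by rw [← hAlg]; exact hU𝒜 hA
    rw [hAlg]
    intro i j hij
    have hij' : i ≠ j := fun h => absurd hij (by rw [h]; exact lt_irrefl _)
    have hA' : A i j = 0 := hA𝒜 i j hij
    simp [Matrix.add_apply, Matrix.smul_apply, hA', hD, Matrix.diagonal_apply_ne _ hij']
  haveI : (𝓝[≠] (0 : ℂ)).NeBot := NormedField.nhdsNE_neBot 0
  set l := 𝓝[≠] (0 : ℂ) with hl
  set Bt : ℂ → Matrix (Fin n) (Fin n) ℂ := fun t => A + t • D with hBt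
  have hBcont : Filter.Tendsto Bt l (𝓝 A) := by
    have hc : Continuous Bt := continuous_const.add (continuous_id.smul continuous_const)
    have h0 : Bt 0 = A := by simp [hBt]
    have h := (hc.tendsto 0).mono_left (nhdsWithin_le_nhds (s := {(0 : ℂ)}ᶜ))
    rw [h0] at h
    exact h
  have hAV : A ∈ V := by rw [hUV] at hA; exact hA.1
  have hEV : ∀ᶠ t in l, Bt t ∈ V := hBcont (hVopen.mem_nhds hAV)
  have hpoly : discCurve A D ≠ 0 := by
    intro h
    have h0 := eval_discCurve A D 0
    rw [h] at h0
    simp only [Polynomial.eval_zero, zero_smul, zero_add] at h0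
    exact det_aeval_deriv_diagonal_ne_zero hvinj h0.symm
  have hEG : ∀ᶠ t in l, (discCurve A D).eval t⁻¹ ≠ 0 := by
    have hfinroot : {x : ℂ | (discCurve A D).IsRoot x}.Finite :=
      Polynomial.finite_setOf_isRoot hpoly
    have hfin3 : (((fun x : ℂ => x⁻¹) '' {x | (discCurve A D).IsRoot x}) \ {0}).Finite :=
      (hfinroot.image _).diff
    have hmemc : (0 : ℂ) ∈ ((((fun x : ℂ => x⁻¹) '' {x | (discCurve A D).IsRoot x}) \ {0})ᶜ) := by
      simp
    have hnhds : ((((fun x : ℂ => x⁻¹) '' {x | (discCurve A D).IsRoot x}) \ {0})ᶜ) ∈ 𝓝 (0 : ℂ) :=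
      hfin3.isClosed.isOpen_compl.mem_nhds hmemc
    filter_upwards [Filter.mem_inf_of_left hnhds, self_mem_nhdsWithin] with t htc ht0
    intro hroot
    have ht0' : t ≠ 0 := ht0
    apply htc
    refine ⟨⟨t⁻¹, hroot, by simp⟩, ?_⟩
    simpa using ht0'
  have hEU : ∀ᶠ t in l, Bt t ∈ U := by
    filter_upwards [hEV] with t ht
    rw [hUV]
    exact ⟨ht, hmem𝒜 t⟩
  have hEchar : ∀ᶠ t in l, (φ (Bt t)).charpoly = (Bt t).charpoly := by
    filter_upwards [hEU, hEG, self_mem_nhdsWithin] with t htU htG ht0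
    have ht0' : t ≠ 0 := ht0
    have hnodup : (t⁻¹ • A + D).charpoly.roots.Nodup := by
      apply nodup_roots_of_det_ne_zero
      rw [← eval_discCurve]
      exact htG
    have hBtEq : Bt t = t • (t⁻¹ • A + D) := by
      rw [smul_add, smul_smul, mul_inv_cancel₀ ht0', one_smul]
    have hncard : (spectrum ℂ (Bt t)).ncard = n := by
      rw [hBtEq, ncard_spectrum_smul _ _ ht0', ncard_spectrum_of_nodup _ hnodup]
    exact charpoly_eq_of_subset hn _ _ hncard (hspec _ htU)
  have hφt : Filter.Tendsto (fun t => φ (Bt t)) l (𝓝 (φ A)) := by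
    have h1 : Filter.Tendsto Bt l (𝓝[𝒜] A) := by
      rw [tendsto_nhdsWithin_iff]
      exact ⟨hBcont, Filter.Eventually.of_forall fun t => hmem𝒜 t⟩
    exact (hcont A (hU𝒜 hA)).tendsto.comp h1
  have hchar : (φ A).charpoly = A.charpoly := by
    apply Polynomial.funext
    intro z
    have hc : Continuous fun M : Matrix (Fin n) (Fin n) ℂ =>
        (z • (1 : Matrix (Fin n) (Fin n) ℂ) - M).det :=
      (continuous_const.sub continuous_id).matrix_det
    have t1 : Filter.Tendsto (fun t => (z • (1 : Matrix (Fin n) (Fin n) ℂ) - φ (Bt t)).det) l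
        (𝓝 ((z • 1 - φ A).det)) := (hc.tendsto _).comp hφt
    have t2 : Filter.Tendsto (fun t => (z • (1 : Matrix (Fin n) (Fin n) ℂ) - Bt t).det) l
        (𝓝 ((z • 1 - A).det)) := (hc.tendsto _).comp hBcont
    have heq : (fun t => (z • (1 : Matrix (Fin n) (Fin n) ℂ) - φ (Bt t)).det)
        =ᶠ[l] (fun t => (z • (1 : Matrix (Fin n) (Fin n) ℂ) - Bt t).det) := by
      filter_upwards [hEchar] with t ht
      rw [← CharpolyAux.eval_charpoly, ← CharpolyAux.eval_charpoly, ht]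
    rw [CharpolyAux.eval_charpoly, CharpolyAux.eval_charpoly]
    exact tendsto_nhds_unique (t1.congr' heq) t2
  refine ⟨hchar, ?_⟩
  ext z
  rw [mem_spectrum_iff_isRoot, mem_spectrum_iff_isRoot, hchar]
end
end

section
/- Let R ∈ M_n(ℂ) be an upper-triangular idempotent matrix of rank one. Then there exist an invertible upper-triangular matrix T ∈ M_n(ℂ) and an index i ∈ {1,…,n} such that R = T E_{ii} T⁻¹. -/
open Matrix

noncomputable section

theorem rank_one_idempotent_upper_triangular {n : ℕ} (R : Matrix (Fin n) (Fin n) ℂ)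
    (hut : ∀ i j : Fin n, j < i → R i j = 0)
    (hidem : R * R = R) (hrank : R.rank = 1) :
    ∃ T : Matrix (Fin n) (Fin n) ℂ, (∀ i j : Fin n, j < i → T i j = 0) ∧ IsUnit T.det ∧
      ∃ i : Fin n, R = T * Matrix.single i i 1 * T⁻¹ := by
  -- diagonal entries are idempotent scalars
  have hdiag : ∀ j : Fin n, R j j * R j j = R j j := by
    intro j
    have h := congrFun (congrFun hidem j) j
    rw [Matrix.mul_apply] at h
    rwa [Finset.sum_eq_single j (fun k _ hk => ?_) (by simp)] at h
    rcases lt_or_gt_of_ne hk with hlt | hlt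
    · rw [hut j k hlt, zero_mul]
    · rw [hut k j hlt, mul_zero]
  have hdiag01 : ∀ j : Fin n, R j j = 0 ∨ R j j = 1 := by
    intro j
    rcases eq_or_ne (R j j) 0 with h | h
    · exact Or.inl h
    · refine Or.inr ?_
      have h2 : R j j * (R j j - 1) = 0 := by linear_combination hdiag j
      rcases mul_eq_zero.mp h2 with h3 | h3
      · exact absurd h3 h
      · linear_combination h3
      
  -- existence of an index with diagonal entry 1
  have hexists : ∃ i : Fin n, R i i = 1 := by
    by_contra hno
    push_neg at hno
    have hzero : ∀ j : Fin n, R j j = 0 := fun j => (hdiag01 j).resolve_right (hno j)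
    have key : ∀ g : ℕ, ∀ k l : Fin n, (l : ℕ) ≤ (k : ℕ) + g → R k l = 0 := by
      intro g
      induction g with
      | zero =>
        intro k l hle
        rcases lt_or_eq_of_le hle with hlt | heq
        · exact hut k l (Fin.lt_def.mpr hlt)
        · have : l = k := Fin.ext (by simpa using heq)
          rw [this]; exact hzero k
      | succ g ih =>
        intro k l hle
        have h := congrFun (congrFun hidem k) l
        rw [Matrix.mul_apply] at h
        rw [← h]
        apply Finset.sum_eq_zero
        intro m _
        by_cases hm : (m : ℕ) ≤ (k : ℕ) + g
        · rw [ih k m hm, zero_mul]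
        · push_neg at hm
          have hlm : (l : ℕ) ≤ (m : ℕ) := by omega
          rcases lt_or_eq_of_le hlm with hlt | heq
          · rw [hut m l (Fin.lt_def.mpr hlt), mul_zero]
          · have : l = m := Fin.ext heq
            rw [← this, hzero l, mul_zero]
    have hR0 : R = 0 := by
      ext k l
      exact key n k l (by omega)
    rw [hR0, Matrix.rank_zero] at hrank
    exact absurd hrank (by norm_num)
  obtain ⟨i, hi⟩ := hexists
  -- uniqueness: all other diagonal entries vanish
  have huniq : ∀ j : Fin n, j ≠ i → R j j = 0 := by
    intro j hji
    by_contra hj0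
    have hj : R j j = 1 := (hdiag01 j).resolve_left hj0
    -- two distinct indices a < b with diagonal entries 1 give rank ≥ 2
    obtain ⟨a, b, hab, ha, hb⟩ : ∃ a b : Fin n, a < b ∧ R a a = 1 ∧ R b b = 1 := by
      rcases lt_or_gt_of_ne hji with h | h
      · exact ⟨j, i, h, hj, hi⟩
      · exact ⟨i, j, h, hi, hj⟩
    set v : Fin n → ℂ := fun k => R k a with hv
    set w : Fin n → ℂ := fun k => R k b with hw
    have hvb : v b = 0 := hut b a hab
    have hli : LinearIndependent ℂ ![v, w] := by
      rw [LinearIndependent.pair_iff]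
      intro s t hst
      have hb' := congrFun hst b
      simp only [Pi.add_apply, Pi.smul_apply, smul_eq_mul, Pi.zero_apply, hv, hw] at hb'
      rw [hut b a hab, hb] at hb'
      have ht : t = 0 := by linear_combination hb'
      have ha' := congrFun hst a
      simp only [Pi.add_apply, Pi.smul_apply, smul_eq_mul, Pi.zero_apply, hv, hw] at ha'
      rw [ha, ht] at ha'
      constructor
      · linear_combination ha'
      · exact ht
    have hmem : ∀ x : Fin 2, ![v, w] x ∈ LinearMap.range R.mulVecLin := by
      intro x
      fin_cases x
      · exact ⟨Pi.single a 1, by ext k; simp [Matrix.mulVecLin_apply, Matrix.mulVec_single_one, hv]⟩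
      · exact ⟨Pi.single b 1, by ext k; simp [Matrix.mulVecLin_apply, Matrix.mulVec_single_one, hw]⟩
    have hspan : Submodule.span ℂ (Set.range ![v, w]) ≤ LinearMap.range R.mulVecLin := by
      rw [Submodule.span_le]
      rintro x ⟨y, rfl⟩
      exact hmem y
    have h2 : (2 : ℕ) ≤ R.rank := by
      have hcard := finrank_span_eq_card hli
      simp only [Fintype.card_fin] at hcard
      calc (2 : ℕ) = Module.finrank ℂ (Submodule.span ℂ (Set.range ![v, w])) := hcard.symm
        _ ≤ Module.finrank ℂ (LinearMap.range R.mulVecLin) := Submodule.finrank_mono hspan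
        _ = R.rank := rfl
    omega
  -- the construction
  set E : Matrix (Fin n) (Fin n) ℂ := Matrix.single i i 1 with hE
  set T : Matrix (Fin n) (Fin n) ℂ := 1 - E - R + R * E + R * E with hT
  have hEE : E * E = E := by rw [hE, Matrix.single_mul_single_same, one_mul]
  have hREl : ∀ k l : Fin n, (R * E) k l = if l = i then R k i else 0 := by
    intro k l
    by_cases hl : l = i
    · subst hl; simp [hE]
    · simp [hl, hE]
  -- triangularity of T
  have hTut : ∀ k l : Fin n, l < k → T k l = 0 := by
    intro k l hlt
    have hkl : k ≠ l := ne_of_gt hlt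
    simp only [hT, Matrix.add_apply, Matrix.sub_apply, Matrix.one_apply_ne hkl, hREl]
    rw [hut k l hlt]
    by_cases hl : l = i
    · subst hl
      rw [if_pos rfl, hut k l hlt]
      simp only [hE, Matrix.single_apply, and_true, if_neg (Ne.symm hkl)]
      ring
    · rw [if_neg hl]; simp only [hE, Matrix.single_apply, if_neg (show ¬(i = k ∧ i = l) by tauto)]
      ring
  -- diagonal entries of T are all 1
  have hTdiag : ∀ j : Fin n, T j j = 1 := by
    intro j
    simp only [hT, Matrix.add_apply, Matrix.sub_apply, Matrix.one_apply_eq, hREl]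
    by_cases hji : j = i
    · subst hji
      simp [hE, hi]
    · rw [if_neg hji, huniq j hji]; simp only [hE, Matrix.single_apply, if_neg (show ¬(i = j ∧ i = j) by tauto)]
      ring
  have hdet : IsUnit T.det := by
    have hbt : T.BlockTriangular id := fun k l h => hTut k l h
    rw [Matrix.det_of_upperTriangular hbt]
    simp only [hTdiag]
    simp
  -- the intertwining relation T * E = R * T
  have hRE2 : R * E * E = R * E := by rw [Matrix.mul_assoc, hEE]
  have hTE : T * E = R * T := by
    simp only [hT, sub_mul, add_mul, mul_sub, mul_add, Matrix.one_mul, Matrix.mul_one,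
      ← Matrix.mul_assoc, hidem, hRE2, hEE]
    abel
  refine ⟨T, hTut, hdet, i, ?_⟩
  rw [← hE, hTE, T.mul_nonsing_inv_cancel_right R hdet]
end
end

section
/- Let A ⊆ M_n(ℂ) be a block upper-triangular subalgebra and let φ : A → M_n(ℂ) be a continuous map which preserves commutativity and spectrum. Then there exists an invertible matrix S ∈ M_n(ℂ) such that φ(D) = S D S⁻¹ for every diagonal matrix D ∈ M_n(ℂ). -/
open Matrix

noncomputable section

/-- Bad-parameter set of a pencil of tuples is finite. -/
lemma aux_bad_finite {n : ℕ} (d e : Fin n → ℂ)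
    (h : ∀ i j : Fin n, i ≠ j → d i ≠ d j ∨ e i ≠ e j) :
    {t : ℂ | ¬ Function.Injective (fun i => d i + t * e i)}.Finite := by
  have hsub : {t : ℂ | ¬ Function.Injective (fun i => d i + t * e i)} ⊆
      ⋃ p : Fin n × Fin n,
        {t : ℂ | p.1 ≠ p.2 ∧ (d p.1 - d p.2) + t * (e p.1 - e p.2) = 0} := by
    intro t ht
    obtain ⟨i, j, heq, hne⟩ := Function.not_injective_iff.1 ht
    exact Set.mem_iUnion.2 ⟨(i, j), hne, by dsimp only; linear_combination heq⟩
  refine Set.Finite.subset (Set.finite_iUnion fun p => ?_) hsub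
  apply Set.Subsingleton.finite
  rintro t1 ⟨hp, h1⟩ t2 ⟨-, h2⟩
  rcases eq_or_ne (e p.1 - e p.2) 0 with hb | hb
  · rcases h p.1 p.2 hp with ha | ha
    · exact absurd (by linear_combination h1 - t1 * hb) (sub_ne_zero.2 ha)
    · exact absurd (sub_eq_zero.1 hb) ha
  · have : (t1 - t2) * (e p.1 - e p.2) = 0 := by linear_combination h1 - h2
    rcases mul_eq_zero.1 this with h' | h'
    · exact sub_eq_zero.1 h'
    · exact absurd h' hb

lemma aux_joined {n : ℕ} {a b : Fin n → ℂ} (ha : Function.Injective a)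
    (hb : Function.Injective b) :
    JoinedIn {d : Fin n → ℂ | Function.Injective d} a b := by
  set B := {t : ℂ | ¬ Function.Injective (fun i => a i + t * (b i - a i))} with hBdef
  have hB : B.Finite := aux_bad_finite a (fun i => b i - a i)
    (fun i j hij => Or.inl (fun h => hij (ha h)))
  have hpc : IsPathConnected Bᶜ :=
    hB.countable.isPathConnected_compl_of_one_lt_rank
      (by rw [Complex.rank_real_complex]; norm_num)
  have h0 : (0 : ℂ) ∈ Bᶜ := by
    simp only [Set.mem_compl_iff, hBdef, Set.mem_setOf_eq, not_not]
    simpa using ha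
  have h1 : (1 : ℂ) ∈ Bᶜ := by
    simp only [Set.mem_compl_iff, hBdef, Set.mem_setOf_eq, not_not]
    simpa using hb
  obtain ⟨γ, hγ⟩ := hpc.joinedIn 0 h0 1 h1
  have hL : Continuous fun t : ℂ => (fun i => a i + t * (b i - a i)) :=
    continuous_pi fun i => continuous_const.add (continuous_id.mul continuous_const)
  refine ⟨((γ.map hL).cast ?_ ?_ : Path a b), ?_⟩
  · funext i; simp
  · funext i; simp
  · intro t
    have := hγ t
    simp only [Set.mem_compl_iff, hBdef, Set.mem_setOf_eq, not_not] at this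
    exact this

lemma aux_inj_dense {n : ℕ} : Dense {d : Fin n → ℂ | Function.Injective d} := by
  intro d
  have hι : Function.Injective (fun i : Fin n => (i : ℂ)) := fun a b hab =>
    Fin.ext (Nat.cast_injective hab)
  set B := {t : ℂ | ¬ Function.Injective (fun i => d i + t * (i : ℂ))} with hBdef
  have hB : B.Finite := aux_bad_finite d (fun i => (i : ℂ))
    (fun i j hij => Or.inr (fun h => hij (hι h)))
  have hdense : Dense Bᶜ := hB.countable.dense_compl ℂ
  have hL : Continuous fun t : ℂ => (fun i : Fin n => d i + t * (i : ℂ)) :=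
    continuous_pi fun i => continuous_const.add (continuous_id.mul continuous_const)
  have h0 : d ∈ closure ((fun t : ℂ => (fun i : Fin n => d i + t * (i : ℂ))) '' Bᶜ) := by
    have hmem : (fun i : Fin n => d i + (0:ℂ) * (i : ℂ)) ∈
        (fun t : ℂ => (fun i : Fin n => d i + t * (i : ℂ))) '' closure Bᶜ :=
      Set.mem_image_of_mem _ (hdense 0)
    have h' := image_closure_subset_closure_image hL hmem
    simpa using h'
  refine closure_mono ?_ h0
  rintro - ⟨t, ht, rfl⟩
  simpa [Set.mem_compl_iff, hBdef] using ht

lemma aux_inj_of_range_eq {n : ℕ} {u v : Fin n → ℂ} (h : Set.range u = Set.range v)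
    (hv : Function.Injective v) : Function.Injective u := by
  classical
  have h1 : Finset.univ.image u = Finset.univ.image v := by
    apply Finset.coe_injective
    simpa [Set.image_univ] using h
  have h2 : (Finset.univ.image u).card = (Finset.univ : Finset (Fin n)).card := by
    rw [h1]
    exact Finset.card_image_of_injective Finset.univ hv
  have h3 : Set.InjOn u (Finset.univ : Finset (Fin n)) := Finset.injOn_of_card_image_eq h2
  intro a b hab
  exact h3 (by simp) (by simp) hab

lemma aux_eigenbasis {n : ℕ} (A : Matrix (Fin n) (Fin n) ℂ) (μ : Fin n → ℂ)
    (hμ : Function.Injective μ) (hspec : ∀ i, μ i ∈ spectrum ℂ A) :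
    ∃ S : Matrix (Fin n) (Fin n) ℂ, IsUnit S.det ∧ A * S = S * Matrix.diagonal μ := by
  have hsp : spectrum ℂ (Matrix.toLin' A) = spectrum ℂ A := by
    rw [← Matrix.toLin_eq_toLin']
    exact AlgEquiv.spectrum_eq (Matrix.toLinAlgEquiv (Pi.basisFun ℂ (Fin n))) A
  have hA : ∀ i, Module.End.HasEigenvalue (Matrix.toLin' A) (μ i) := fun i =>
    Module.End.hasEigenvalue_iff_mem_spectrum.2 (hsp ▸ hspec i)
  choose v hv using fun i => (hA i).exists_hasEigenvector
  have hli : LinearIndependent ℂ v :=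
    Module.End.eigenvectors_linearIndependent' (Matrix.toLin' A) μ hμ v hv
  set S : Matrix (Fin n) (Fin n) ℂ := Matrix.of fun a i => v i a with hS
  have hcols : (fun i => Sᵀ i) = v := by
    funext i; funext a; rfl
  have hunit : IsUnit S := Matrix.linearIndependent_cols_iff_isUnit.1 (show LinearIndependent ℂ S.col from hli)
  refine ⟨S, (Matrix.isUnit_iff_isUnit_det S).1 hunit, ?_⟩
  ext a i
  have h1 : A.mulVec (v i) = μ i • v i := by
    have := (hv i).apply_eq_smul
    rwa [Matrix.toLin'_apply] at this
  have h2 : (A * S) a i = (A.mulVec (v i)) a := by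
    simp [Matrix.mul_apply, Matrix.mulVec, dotProduct, hS]
  rw [h2, h1, Matrix.mul_diagonal]
  simp [hS, mul_comm]

lemma aux_spec_conj {n : ℕ} {S : Matrix (Fin n) (Fin n) ℂ} (hS : IsUnit S)
    (X : Matrix (Fin n) (Fin n) ℂ) : spectrum ℂ (S⁻¹ * X * S) = spectrum ℂ X := by
  have h1 : (↑hS.unit⁻¹ : Matrix (Fin n) (Fin n) ℂ) = S⁻¹ := by
    rw [Matrix.coe_units_inv, hS.unit_spec]
  have h2 := spectrum.units_conjugate' (R := ℂ) (a := X) (u := hS.unit)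
  rwa [h1, hS.unit_spec] at h2

lemma aux_perm_conj {n : ℕ} (σ : Fin n → Fin n) (hσ : Function.Injective σ) :
    ∃ P : Matrix (Fin n) (Fin n) ℂ, IsUnit P.det ∧
      ∀ d : Fin n → ℂ, Matrix.diagonal (fun i => d (σ i)) = P * Matrix.diagonal d * P⁻¹ := by
  classical
  set P : Matrix (Fin n) (Fin n) ℂ := Matrix.of fun i j => if σ i = j then 1 else 0 with hP
  have hPP : P * Pᵀ = 1 := by
    ext i j
    simp only [Matrix.mul_apply, Matrix.transpose_apply, hP, Matrix.of_apply,
      ite_mul, one_mul, zero_mul, Finset.sum_ite_eq, Finset.mem_univ, if_true,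
      Matrix.one_apply]
    by_cases h : i = j
    · subst h; simp
    · have h' : σ j ≠ σ i := fun hh => h (hσ hh).symm
      simp [h, h']
  have hPu : IsUnit P.det := by
    have hd : P.det * Pᵀ.det = 1 := by rw [← Matrix.det_mul, hPP, Matrix.det_one]
    exact isUnit_iff_exists_inv.2 ⟨_, hd⟩
  have key : ∀ d : Fin n → ℂ,
      P * Matrix.diagonal d = Matrix.diagonal (fun i => d (σ i)) * P := by
    intro d
    ext i j
    rw [Matrix.mul_diagonal, Matrix.diagonal_mul]
    simp only [hP, Matrix.of_apply, ite_mul, mul_ite, one_mul, mul_one,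
      mul_zero, zero_mul]
    by_cases h : σ i = j
    · subst h; simp
    · simp [h]
  refine ⟨P, hPu, fun d => ?_⟩
  calc Matrix.diagonal (fun i => d (σ i))
      = Matrix.diagonal (fun i => d (σ i)) * (P * P⁻¹) := by
        rw [Matrix.mul_nonsing_inv P hPu, mul_one]
    _ = (Matrix.diagonal (fun i => d (σ i)) * P) * P⁻¹ := by rw [Matrix.mul_assoc]
    _ = P * Matrix.diagonal d * P⁻¹ := by rw [← key]

set_option maxHeartbeats 2000000 in
theorem diagonal_matrices_conjugated {n : ℕ} (𝒜 : Set (Matrix (Fin n) (Fin n) ℂ))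
    (h𝒜 : IsBlockUT n 𝒜)
    (φ : Matrix (Fin n) (Fin n) ℂ → Matrix (Fin n) (Fin n) ℂ)
    (hcont : ContinuousOn φ 𝒜)
    (hcomm : ∀ X ∈ 𝒜, ∀ Y ∈ 𝒜, X * Y = Y * X → φ X * φ Y = φ Y * φ X)
    (hspec : ∀ X ∈ 𝒜, spectrum ℂ (φ X) = spectrum ℂ X) :
    ∃ S : Matrix (Fin n) (Fin n) ℂ, IsUnit S.det ∧
      ∀ d : Fin n → ℂ, φ (Matrix.diagonal d) = S * Matrix.diagonal d * S⁻¹ := by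
  classical
  obtain ⟨k, hk0, hksum, rfl⟩ := h𝒜
  have hdmem : ∀ d : Fin n → ℂ, Matrix.diagonal d ∈ blockAlg n k := by
    intro d i j hlt
    rcases eq_or_ne i j with rfl | hne
    · exact absurd hlt (lt_irrefl _)
    · exact Matrix.diagonal_apply_ne d hne
  set μ : Fin n → ℂ := fun i => (i : ℂ) with hμdef
  have hμ : Function.Injective μ := by
    intro a b hab
    simp only [hμdef] at hab
    exact Fin.ext (by exact_mod_cast hab)
  have hAspec : ∀ i, μ i ∈ spectrum ℂ (φ (Matrix.diagonal μ)) := by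
    intro i
    rw [hspec _ (hdmem μ), spectrum_diagonal]
    exact ⟨i, rfl⟩
  obtain ⟨S, hSdet, hAS⟩ := aux_eigenbasis _ μ hμ hAspec
  have hSu : IsUnit S := (Matrix.isUnit_iff_isUnit_det S).2 hSdet
  have hS1 : S⁻¹ * S = 1 := Matrix.nonsing_inv_mul S hSdet
  have hS2 : S * S⁻¹ = 1 := Matrix.mul_nonsing_inv S hSdet
  set N : (Fin n → ℂ) → Matrix (Fin n) (Fin n) ℂ :=
    fun d => S⁻¹ * φ (Matrix.diagonal d) * S with hNdef
  have key : ∀ X Y : Matrix (Fin n) (Fin n) ℂ,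
      (S⁻¹ * X * S) * (S⁻¹ * Y * S) = S⁻¹ * (X * Y) * S := by
    intro X Y
    have h' : S * (S⁻¹ * (Y * S)) = Y * S := by
      rw [← Matrix.mul_assoc S S⁻¹, hS2, one_mul]
    calc (S⁻¹ * X * S) * (S⁻¹ * Y * S)
        = S⁻¹ * (X * (S * (S⁻¹ * (Y * S)))) := by simp only [Matrix.mul_assoc]
      _ = S⁻¹ * (X * (Y * S)) := by rw [h']
      _ = S⁻¹ * (X * Y) * S := by simp only [Matrix.mul_assoc]
  have hNmu : N μ = Matrix.diagonal μ := by
    rw [hNdef]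
    dsimp only
    rw [Matrix.mul_assoc, hAS, ← Matrix.mul_assoc, hS1, one_mul]
  have hNcomm : ∀ d, N d * Matrix.diagonal μ = Matrix.diagonal μ * N d := by
    intro d
    have hc : φ (Matrix.diagonal d) * φ (Matrix.diagonal μ)
        = φ (Matrix.diagonal μ) * φ (Matrix.diagonal d) :=
      hcomm _ (hdmem d) _ (hdmem μ) (by
        rw [Matrix.diagonal_mul_diagonal, Matrix.diagonal_mul_diagonal]
        exact congrArg _ (funext fun i => mul_comm _ _))
    calc N d * Matrix.diagonal μ = N d * N μ := by rw [hNmu]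
      _ = S⁻¹ * (φ (Matrix.diagonal d) * φ (Matrix.diagonal μ)) * S := key _ _
      _ = S⁻¹ * (φ (Matrix.diagonal μ) * φ (Matrix.diagonal d)) * S := by rw [hc]
      _ = N μ * N d := (key _ _).symm
      _ = Matrix.diagonal μ * N d := by rw [hNmu]
  have hNdiag : ∀ d, N d = Matrix.diagonal (fun i => N d i i) := by
    intro d
    ext i j
    rcases eq_or_ne i j with rfl | hne
    · rw [Matrix.diagonal_apply_eq]
    · rw [Matrix.diagonal_apply_ne _ hne]
      have h := congrFun (congrFun (hNcomm d) i) j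
      have h' : N d i j * μ j = μ i * N d i j := by
        simpa [Matrix.mul_diagonal, Matrix.diagonal_mul] using h
      have hμne : μ i ≠ μ j := fun hh => hne (hμ hh)
      have h'' : N d i j * (μ j - μ i) = 0 := by linear_combination h'
      rcases mul_eq_zero.1 h'' with h0 | h0
      · exact h0
      · exact absurd (sub_eq_zero.1 h0).symm hμne
  have hrange : ∀ d, Set.range (fun i => N d i i) = Set.range d := by
    intro d
    calc Set.range (fun i => N d i i)
        = spectrum ℂ (Matrix.diagonal (fun i => N d i i)) :=
          (spectrum_diagonal _).symm
      _ = spectrum ℂ (N d) := by rw [← hNdiag d]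
      _ = spectrum ℂ (φ (Matrix.diagonal d)) := aux_spec_conj hSu _
      _ = spectrum ℂ (Matrix.diagonal d) := hspec _ (hdmem d)
      _ = Set.range d := spectrum_diagonal d
  set f : (Fin n → ℂ) → (Fin n → ℂ) := fun d i => N d i i with hfdef
  have hfc : ∀ i, Continuous fun d => f d i := by
    intro i
    have h1 : Continuous fun d : Fin n → ℂ => φ (Matrix.diagonal d) := by
      have := hcont.comp_continuous (Continuous.matrix_diagonal continuous_id)
        (fun d => hdmem d)
      exact this
    exact ((continuous_const.matrix_mul h1).matrix_mul continuous_const).matrix_elem i i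
  set g : (Fin n → ℂ) → (Fin n → Fin n) := fun d i =>
    if h : ∃ j, d j = f d i then h.choose else i with hgdef
  have hg : ∀ d i, d (g d i) = f d i := by
    intro d i
    have hex : ∃ j, d j = f d i := by
      have hmem : f d i ∈ Set.range d := by
        rw [← hrange d]; exact ⟨i, rfl⟩
      obtain ⟨j, hj⟩ := hmem; exact ⟨j, hj⟩
    rw [hgdef]
    dsimp only
    rw [dif_pos hex]
    exact hex.choose_spec
  set U := {d : Fin n → ℂ | Function.Injective d} with hUdef
  have hμU : μ ∈ U := hμ
  have hUconn : IsPreconnected U := by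
    have hpc : IsPathConnected U := by
      refine ⟨μ, hμU, ?_⟩
      intro b hb
      exact aux_joined hμ (hb : Function.Injective b)
    exact hpc.isConnected.isPreconnected
  have hgcont : ContinuousOn g U := by
    intro d hd
    rcases le_or_gt n 1 with hn | hn
    · have hss : Subsingleton (Fin n) :=
        Fintype.card_le_one_iff_subsingleton.mp (by simpa using hn)
      have hconst : g = fun _ => g d :=
        funext fun d' => funext fun i => Subsingleton.elim _ _
      rw [hconst]
      exact continuousWithinAt_const
    · have h01 : ((⟨0, by omega⟩ : Fin n), (⟨1, by omega⟩ : Fin n)) ∈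
          (Finset.univ : Finset (Fin n)).offDiag := by
        simp [Finset.mem_offDiag, Fin.ext_iff]
      obtain ⟨q, hq, hqle⟩ := Finset.exists_min_image
        (Finset.univ : Finset (Fin n)).offDiag
        (fun p : Fin n × Fin n => dist (d p.1) (d p.2)) ⟨_, h01⟩
      rw [Finset.mem_offDiag] at hq
      set m : ℝ := dist (d q.1) (d q.2) with hmdef
      have hm : 0 < m := dist_pos.2 fun hh => hq.2.2 (hd hh)
      have hmle : ∀ i j : Fin n, i ≠ j → m ≤ dist (d i) (d j) := by
        intro i j hij
        exact hqle (i, j) (by simp [Finset.mem_offDiag, hij])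
      have hev : ∀ᶠ d' in nhds d,
          (∀ i, dist (f d' i) (f d i) < m/3) ∧ (∀ i, dist (d' i) (d i) < m/3) := by
        have h1 : ∀ i, ∀ᶠ d' in nhds d, dist (f d' i) (f d i) < m/3 := fun i =>
          Metric.tendsto_nhds.mp ((hfc i).tendsto d) (m/3) (by linarith)
        have h2 : ∀ i, ∀ᶠ d' in nhds d, dist (d' i) (d i) < m/3 := fun i =>
          Metric.tendsto_nhds.mp ((continuous_apply i).tendsto d) (m/3) (by linarith)
        exact (Filter.eventually_all.2 h1).and (Filter.eventually_all.2 h2)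
      have hloc : ∀ᶠ d' in nhdsWithin d U, g d' = g d := by
        filter_upwards [nhdsWithin_le_nhds hev] with d' hd'
        funext i
        by_contra hne2
        have e1 : d' (g d' i) = f d' i := hg d' i
        have e2 : d (g d i) = f d i := hg d i
        have t1 : dist (d (g d' i)) (d' (g d' i)) < m/3 := by
          rw [dist_comm]; exact hd'.2 _
        have t2 : dist (d' (g d' i)) (d (g d i)) < m/3 := by
          rw [e1, e2]; exact hd'.1 i
        have t3 : dist (d (g d' i)) (d (g d i)) < m := by
          have := dist_triangle (d (g d' i)) (d' (g d' i)) (d (g d i))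
          linarith
        have t4 : m ≤ dist (d (g d' i)) (d (g d i)) := hmle _ _ hne2
        linarith
      rw [ContinuousWithinAt, nhds_discrete, Filter.tendsto_pure]
      exact hloc
  set σ₀ : Fin n → Fin n := g μ with hσ₀def
  have hconstg : ∀ d ∈ U, g d = σ₀ := fun d hd => hUconn.constant hgcont hd hμU
  have hfU : ∀ d ∈ U, ∀ i, f d i = d (σ₀ i) := by
    intro d hd i
    rw [← hconstg d hd]
    exact (hg d i).symm
  have hall : ∀ d : Fin n → ℂ, ∀ i, f d i = d (σ₀ i) := by
    have hC : IsClosed {d : Fin n → ℂ | ∀ i, f d i = d (σ₀ i)} := by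
      have : {d : Fin n → ℂ | ∀ i, f d i = d (σ₀ i)} =
          ⋂ i, {d : Fin n → ℂ | f d i = d (σ₀ i)} := by
        ext d; simp
      rw [this]
      exact isClosed_iInter fun i => isClosed_eq (hfc i) (continuous_apply (σ₀ i))
    intro d
    exact (hC.closure_subset_iff.2 (fun x hx => hfU x hx)) (aux_inj_dense d)
  have hσ₀inj : Function.Injective σ₀ := by
    have hfinj : Function.Injective (f μ) := aux_inj_of_range_eq (hrange μ) hμ
    intro i j hij
    apply hfinj
    rw [hall μ i, hall μ j, hij]
  obtain ⟨P, hPdet, hPconj⟩ := aux_perm_conj σ₀ hσ₀inj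
  refine ⟨S * P, by rw [Matrix.det_mul]; exact hSdet.mul hPdet, ?_⟩
  intro d
  have h1 : φ (Matrix.diagonal d) = S * N d * S⁻¹ := by
    rw [hNdef]
    dsimp only
    calc φ (Matrix.diagonal d)
        = (S * S⁻¹) * φ (Matrix.diagonal d) * (S * S⁻¹) := by rw [hS2, one_mul, mul_one]
      _ = S * (S⁻¹ * φ (Matrix.diagonal d) * S) * S⁻¹ := by simp only [Matrix.mul_assoc]
  have h2 : N d = Matrix.diagonal (fun i => d (σ₀ i)) := by
    rw [hNdiag d]
    exact congrArg Matrix.diagonal (funext fun i => hall d i)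
  rw [h1, h2, hPconj d, Matrix.mul_inv_rev]
  simp only [Matrix.mul_assoc]
end
end

section
/- Let A ⊆ M_n(ℂ) be a block upper-triangular subalgebra, let φ : A → M_n(ℂ) be a continuous map which preserves commutativity and spectrum and fixes every diagonal matrix, and fix k ∈ {1,…,n}. Suppose S ∈ A and T ∈ M_n(ℂ) are invertible matrices such that φ(S E_{ii} S⁻¹) = T E_{ii} T⁻¹ for every i ≠ k. Then also φ(S E_{kk} S⁻¹) = T E_{kk} T⁻¹. -/
open Matrix

noncomputable section

set_option maxHeartbeats 1000000

noncomputable def blockSub (n : ℕ) (k : List ℕ) : Subalgebra ℂ (Matrix (Fin n) (Fin n) ℂ) where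
  carrier := blockAlg n k
  mul_mem' := by
    intro a b ha hb i j hij
    rw [Matrix.mul_apply]
    refine Finset.sum_eq_zero fun l _ => ?_
    rcases lt_or_ge (blockIdx k (l : ℕ)) (blockIdx k (i : ℕ)) with hl | hl
    · rw [ha i l hl, zero_mul]
    · rw [hb l j (lt_of_lt_of_le hij hl), mul_zero]
  add_mem' := by
    intro a b ha hb i j hij
    simp only [Matrix.add_apply, ha i j hij, hb i j hij, add_zero]
  algebraMap_mem' := by
    intro r i j hij
    have hne : i ≠ j := by rintro rfl; exact lt_irrefl _ hij
    rw [Matrix.algebraMap_matrix_apply, if_neg hne]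

lemma blockAlg_diagonal (n : ℕ) (k : List ℕ) (d : Fin n → ℂ) :
    Matrix.diagonal d ∈ blockAlg n k := by
  intro i j hij
  exact Matrix.diagonal_apply_ne d (by rintro rfl; exact lt_irrefl _ hij)

lemma inv_mem_subalg {n : ℕ} {A : Subalgebra ℂ (Matrix (Fin n) (Fin n) ℂ)}
    {S : Matrix (Fin n) (Fin n) ℂ} (hS : S ∈ A) (hdet : IsUnit S.det) : S⁻¹ ∈ A := by
  have hadj : Algebra.adjoin ℂ {S} ≤ A := Algebra.adjoin_le (Set.singleton_subset_iff.mpr hS)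
  set p := S.charpoly with hp
  have hCH : Polynomial.aeval S p = 0 := Matrix.aeval_self_charpoly S
  have hsplit : p.divX * Polynomial.X + Polynomial.C (p.coeff 0) = p := Polynomial.divX_mul_X_add p
  set c := p.coeff 0 with hc
  have hcne : c ≠ 0 := by
    intro h0
    have hd := Matrix.det_eq_sign_charpoly_coeff S
    rw [← hc, h0, mul_zero] at hd
    rw [hd] at hdet
    exact hdet.ne_zero rfl
  set B := Polynomial.aeval S p.divX with hB
  have hBA : B ∈ A := by
    apply hadj
    rw [Algebra.adjoin_singleton_eq_range_aeval]
    exact ⟨p.divX, rfl⟩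
  have hBS : B * S + c • (1 : Matrix (Fin n) (Fin n) ℂ) = 0 := by
    have h2 := congrArg (Polynomial.aeval S) hsplit
    rw [hCH] at h2
    rw [map_add, _root_.map_mul, Polynomial.aeval_X, Polynomial.aeval_C,
      Algebra.algebraMap_eq_smul_one] at h2
    exact h2
  have hleft : ((-c)⁻¹ • B) * S = 1 := by
    have h1 : B * S = (-c) • (1 : Matrix (Fin n) (Fin n) ℂ) := by
      have h3 := eq_neg_of_add_eq_zero_left hBS
      rw [h3, neg_smul]
    rw [Matrix.smul_mul, h1, smul_smul, inv_mul_cancel₀ (neg_ne_zero.mpr hcne), one_smul]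
  have hinv : S⁻¹ = (-c)⁻¹ • B := Matrix.inv_eq_left_inv hleft
  rw [hinv]
  exact A.smul_mem hBA _

lemma branch_const {ι : Type*} [Finite ι] {g : ℝ → ℂ} {b : ι → ℝ → ℂ}
    (hg : Continuous g) (hb : ∀ j, Continuous (b j))
    (hdist : ∀ t ∈ Set.Ioo (0:ℝ) 1, ∀ j j', j ≠ j' → b j t ≠ b j' t)
    (hmem : ∀ t ∈ Set.Ioo (0:ℝ) 1, ∃ j, g t = b j t) :
    ∃ j, ∀ t ∈ Set.Icc (0:ℝ) 1, g t = b j t := by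
  haveI : PreconnectedSpace ↥(Set.Ioo (0:ℝ) 1) := Subtype.preconnectedSpace isPreconnected_Ioo
  set C : ι → Set ↥(Set.Ioo (0:ℝ) 1) := fun j => {t | g ↑t = b j ↑t} with hC
  have hclosed : ∀ j, IsClosed (C j) := fun j =>
    isClosed_eq (hg.comp continuous_subtype_val) ((hb j).comp continuous_subtype_val)
  have t₀ : ↥(Set.Ioo (0:ℝ) 1) := ⟨1/2, by norm_num⟩
  obtain ⟨j₀, hj₀⟩ := hmem (t₀ : ℝ) t₀.2
  have hopen : IsOpen (C j₀) := by
    rw [← isClosed_compl_iff]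
    have : (C j₀)ᶜ = ⋃ j : {j : ι // j ≠ j₀}, C j.1 := by
      ext t
      simp only [Set.mem_compl_iff, Set.mem_iUnion, hC, Set.mem_setOf_eq]
      constructor
      · intro hne
        obtain ⟨j, hj⟩ := hmem (t : ℝ) t.2
        exact ⟨⟨j, fun hjj => hne (hjj ▸ hj)⟩, hj⟩
      · rintro ⟨⟨j, hjne⟩, hj⟩ heq
        exact hdist (t : ℝ) t.2 j j₀ hjne (hj ▸ heq)
    rw [this]
    exact isClosed_iUnion_of_finite fun j => hclosed j.1
  have huniv : C j₀ = Set.univ :=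
    IsClopen.eq_univ ⟨hclosed j₀, hopen⟩ ⟨t₀, hj₀⟩
  refine ⟨j₀, ?_⟩
  have heqon : Set.EqOn g (b j₀) (Set.Ioo (0:ℝ) 1) := by
    intro t ht
    have : (⟨t, ht⟩ : ↥(Set.Ioo (0:ℝ) 1)) ∈ C j₀ := huniv ▸ Set.mem_univ _
    exact this
  have := heqon.closure hg (hb j₀)
  rw [closure_Ioo (by norm_num : (0:ℝ) ≠ 1)] at this
  exact this

lemma stdBasis_eq_diag {n : ℕ} (i : Fin n) :
    Matrix.single i i (1:ℂ) = Matrix.diagonal (Pi.single i 1) := by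
  ext p q
  rw [Matrix.single]
  by_cases hp : p = q
  · subst hp
    by_cases hip : i = p
    · subst hip; simp
    · simp [Matrix.diagonal_apply_eq, Pi.single_apply, hip, Ne.symm hip]
  · simp only [Matrix.of_apply, Matrix.diagonal_apply_ne _ hp]
    rw [if_neg]
    rintro ⟨rfl, rfl⟩
    exact hp rfl

lemma spectrum_conj_right {n : ℕ} (Tm A : Matrix (Fin n) (Fin n) ℂ) (hT : IsUnit Tm.det) :
    spectrum ℂ (Tm * A * Tm⁻¹) = spectrum ℂ A := by
  have h3 : Tm * A * Tm⁻¹ = (Tm.nonsingInvUnit hT : Matrix (Fin n) (Fin n) ℂ) * A *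
      (((Tm.nonsingInvUnit hT)⁻¹ : (Matrix (Fin n) (Fin n) ℂ)ˣ) : Matrix (Fin n) (Fin n) ℂ) := rfl
  rw [h3, spectrum.units_conjugate]

lemma spectrum_conj_left {n : ℕ} (Tm A : Matrix (Fin n) (Fin n) ℂ) (hT : IsUnit Tm.det) :
    spectrum ℂ (Tm⁻¹ * A * Tm) = spectrum ℂ A := by
  have h3 : Tm⁻¹ * A * Tm =
      (((Tm.nonsingInvUnit hT)⁻¹ : (Matrix (Fin n) (Fin n) ℂ)ˣ) : Matrix (Fin n) (Fin n) ℂ) * A *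
      (Tm.nonsingInvUnit hT : Matrix (Fin n) (Fin n) ℂ) := rfl
  rw [h3, spectrum.units_conjugate']

theorem remaining_diagonal_unit {n : ℕ} (𝒜 : Set (Matrix (Fin n) (Fin n) ℂ))
    (h𝒜 : IsBlockUT n 𝒜)
    (φ : Matrix (Fin n) (Fin n) ℂ → Matrix (Fin n) (Fin n) ℂ)
    (hcont : ContinuousOn φ 𝒜)
    (hcomm : ∀ X ∈ 𝒜, ∀ Y ∈ 𝒜, X * Y = Y * X → φ X * φ Y = φ Y * φ X)
    (hspec : ∀ X ∈ 𝒜, spectrum ℂ (φ X) = spectrum ℂ X)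
    (hfix : ∀ d : Fin n → ℂ, φ (Matrix.diagonal d) = Matrix.diagonal d)
    (k : Fin n) (S T : Matrix (Fin n) (Fin n) ℂ) (hS : S ∈ 𝒜) (hSdet : IsUnit S.det) (hTdet : IsUnit T.det)
    (h : ∀ i : Fin n, i ≠ k →
      φ (S * Matrix.single i i 1 * S⁻¹) = T * Matrix.single i i 1 * T⁻¹) :
    φ (S * Matrix.single k k 1 * S⁻¹) = T * Matrix.single k k 1 * T⁻¹ := by
  obtain ⟨kl, -, -, rfl⟩ := h𝒜
  -- basic memberships
  have hSinv : S⁻¹ ∈ blockAlg n kl := inv_mem_subalg (A := blockSub n kl) hS hSdet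
  set Y : (Fin n → ℂ) → Matrix (Fin n) (Fin n) ℂ := fun x => S * Matrix.diagonal x * S⁻¹ with hY
  have hYmem : ∀ x, Y x ∈ blockAlg n kl := fun x =>
    (blockSub n kl).mul_mem ((blockSub n kl).mul_mem hS (blockAlg_diagonal n kl x)) hSinv
  have hPY : ∀ i : Fin n, S * Matrix.single i i 1 * S⁻¹ = Y (Pi.single i 1) := by
    intro i; rw [hY, stdBasis_eq_diag]
  -- spectrum of Y x
  have hspecY : ∀ x, spectrum ℂ (Y x) = Set.range x := by
    intro x
    rw [hY]
    rw [spectrum_conj_right S (Matrix.diagonal x) hSdet, spectrum_diagonal]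
  -- key multiplication identity
  have key : ∀ a b : Matrix (Fin n) (Fin n) ℂ, (S*a*S⁻¹)*(S*b*S⁻¹) = S*(a*b)*S⁻¹ := by
    intro a b
    simp only [Matrix.mul_assoc, Matrix.nonsing_inv_mul_cancel_left _ _ hSdet]
  -- commutation of φ values
  have hφc : ∀ x, ∀ j : Fin n, j ≠ k →
      φ (Y x) * (T * Matrix.single j j 1 * T⁻¹)
        = (T * Matrix.single j j 1 * T⁻¹) * φ (Y x) := by
    intro x j hj
    rw [← h j hj]
    refine hcomm _ (hYmem x) _ (by rw [hPY]; exact hYmem _) ?_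
    rw [hPY, hY]
    simp only []
    have hcd : (fun l => x l * (Pi.single j 1 : Fin n → ℂ) l)
        = fun l => (Pi.single j 1 : Fin n → ℂ) l * x l :=
      funext fun l => mul_comm (x l) ((Pi.single j 1 : Fin n → ℂ) l)
    rw [key, key, Matrix.diagonal_mul_diagonal, Matrix.diagonal_mul_diagonal, hcd]
  -- diagonality of conjugated φ values
  have hdiagY : ∀ x, T⁻¹ * φ (Y x) * T =
      Matrix.diagonal (fun p => (T⁻¹ * φ (Y x) * T) p p) := by
    intro x
    ext p q
    by_cases hpq : p = q
    · subst hpq; rw [Matrix.diagonal_apply_eq]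
    · rw [Matrix.diagonal_apply_ne _ hpq]
      have main : ∀ j : Fin n, j ≠ k →
          (T⁻¹ * φ (Y x) * T) p q * (Pi.single j 1 : Fin n → ℂ) q
            = (Pi.single j 1 : Fin n → ℂ) p * (T⁻¹ * φ (Y x) * T) p q := by
        intro j hjk
        have hM : (T⁻¹ * φ (Y x) * T) * Matrix.diagonal (Pi.single j (1:ℂ))
            = Matrix.diagonal (Pi.single j (1:ℂ)) * (T⁻¹ * φ (Y x) * T) := by
          have h0 := hφc x j hjk
          rw [stdBasis_eq_diag] at h0
          calc T⁻¹ * φ (Y x) * T * Matrix.diagonal (Pi.single j 1)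
              = T⁻¹ * (φ (Y x) * (T * Matrix.diagonal (Pi.single j 1) * T⁻¹)) * T := by
                simp only [Matrix.mul_assoc, Matrix.nonsing_inv_mul_cancel_left _ _ hTdet,
                  Matrix.mul_nonsing_inv_cancel_left _ _ hTdet,
                  Matrix.nonsing_inv_mul _ hTdet, Matrix.mul_one]
            _ = T⁻¹ * ((T * Matrix.diagonal (Pi.single j 1) * T⁻¹) * φ (Y x)) * T := by rw [h0]
            _ = Matrix.diagonal (Pi.single j 1) * (T⁻¹ * φ (Y x) * T) := by
                simp only [Matrix.mul_assoc, Matrix.nonsing_inv_mul_cancel_left _ _ hTdet]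
        have hent := congrFun (congrFun hM p) q
        rw [Matrix.mul_diagonal, Matrix.diagonal_mul] at hent
        exact hent
      by_cases hpk : p = k
      · have hqk : q ≠ k := fun hq => hpq (hpk.trans hq.symm)
        have hthis := main q hqk
        rw [Pi.single_eq_same, mul_one, Pi.single_eq_of_ne hpq 1, zero_mul] at hthis
        exact hthis
      · have hthis := main p hpk
        rw [Pi.single_eq_of_ne (Ne.symm hpq) 1, mul_zero, Pi.single_eq_same, one_mul] at hthis
        exact hthis.symm
  -- diagonal entries lie in the range of x
  have hval : ∀ x, ∀ p : Fin n, ∃ j, (T⁻¹ * φ (Y x) * T) p p = x j := by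
    intro x p
    have h1 : spectrum ℂ (φ (Y x)) = Set.range x := by
      rw [hspec _ (hYmem x), hspecY x]
    have h2 : spectrum ℂ (T⁻¹ * φ (Y x) * T) = spectrum ℂ (φ (Y x)) :=
      spectrum_conj_left T (φ (Y x)) hTdet
    have h3 : (T⁻¹ * φ (Y x) * T) p p ∈ spectrum ℂ (T⁻¹ * φ (Y x) * T) := by
      rw [hdiagY x, spectrum_diagonal]
      exact ⟨p, (Matrix.diagonal_apply_eq _ p).symm⟩
    rw [h2, h1] at h3
    obtain ⟨j, hj⟩ := h3
    exact ⟨j, hj.symm⟩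
  -- Claim A : off-diagonal entries (at positions i ≠ k) vanish
  have claimA : ∀ i : Fin n, i ≠ k → (T⁻¹ * φ (Y (Pi.single k 1)) * T) i i = 0 := by
    intro i hik
    set m : Fin n → ℝ := fun j => if j = k then 1 else if j = i then 0 else (j : ℕ) + 2 with hm
    set re : Fin n → ℝ → ℝ := fun j t => if j = k then 1 - t else if j = i then t else 0 with hre
    set x : ℝ → Fin n → ℂ := fun t j => ((re j t : ℝ) : ℂ)
        + Complex.I * ((m j * (t * (1 - t)) : ℝ) : ℂ) with hx
    have hmnn : ∀ j : Fin n, j ≠ k → j ≠ i → m j = (j : ℕ) + 2 := by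
      intro j h1 h2; rw [hm]; simp only [if_neg h1, if_neg h2]
    have hminj : Function.Injective m := by
      intro a b hab
      by_cases hak : a = k <;> by_cases hbk : b = k
      · rw [hak, hbk]
      · exfalso
        rw [hm] at hab; simp only [if_pos hak, if_neg hbk] at hab
        by_cases hbi : b = i
        · rw [if_pos hbi] at hab; norm_num at hab
        · rw [if_neg hbi] at hab
          have : (0:ℝ) ≤ ((b:ℕ):ℝ) := Nat.cast_nonneg _
          linarith
      · exfalso
        rw [hm] at hab; simp only [if_neg hak, if_pos hbk] at hab
        by_cases hai : a = i
        · rw [if_pos hai] at hab; norm_num at hab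
        · rw [if_neg hai] at hab
          have : (0:ℝ) ≤ ((a:ℕ):ℝ) := Nat.cast_nonneg _
          linarith
      · by_cases hai : a = i <;> by_cases hbi : b = i
        · rw [hai, hbi]
        · exfalso
          rw [hmnn b hbk hbi, hm] at hab
          simp only [if_neg hak, if_pos hai] at hab
          have : (0:ℝ) ≤ ((b:ℕ):ℝ) := Nat.cast_nonneg _
          linarith
        · exfalso
          rw [hmnn a hak hai, hm] at hab
          simp only [if_neg hbk, if_pos hbi] at hab
          have : (0:ℝ) ≤ ((a:ℕ):ℝ) := Nat.cast_nonneg _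
          linarith
        · rw [hmnn a hak hai, hmnn b hbk hbi] at hab
          have : ((a:ℕ):ℝ) = ((b:ℕ):ℝ) := by linarith
          exact Fin.ext (Nat.cast_injective this)
    have hxim : ∀ t : ℝ, ∀ j : Fin n, (x t j).im = m j * (t * (1 - t)) := by
      intro t j
      rw [hx]
      simp [Complex.add_im, Complex.mul_im]
    have hdist : ∀ t ∈ Set.Ioo (0:ℝ) 1, ∀ a b : Fin n, a ≠ b → x t a ≠ x t b := by
      intro t ht a b hab heq
      have him := congrArg Complex.im heq
      rw [hxim, hxim] at him
      have hs : 0 < t * (1 - t) := mul_pos ht.1 (by linarith [ht.2])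
      exact hab (hminj (mul_right_cancel₀ (ne_of_gt hs) him))
    -- continuity
    have hxc : Continuous fun t : ℝ => x t := by
      apply continuous_pi
      intro j
      rw [hx]
      simp only
      apply Continuous.add
      · apply Complex.continuous_ofReal.comp
        rw [hre]; simp only
        split
        · fun_prop
        · split
          · fun_prop
          · fun_prop
      · apply Continuous.mul continuous_const
        apply Complex.continuous_ofReal.comp
        fun_prop
    have hYc : Continuous fun t : ℝ => Y (x t) := by
      rw [hY]; simp only
      exact (continuous_const.matrix_mul (hxc.matrix_diagonal)).matrix_mul continuous_const
    have hφYc : Continuous fun t : ℝ => φ (Y (x t)) :=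
      hcont.comp_continuous hYc fun t => hYmem _
    have hgc : Continuous fun t : ℝ => (T⁻¹ * φ (Y (x t)) * T) i i :=
      ((continuous_const.matrix_mul hφYc).matrix_mul continuous_const).matrix_elem i i
    obtain ⟨j₀, hj₀⟩ := branch_const (b := fun j t => x t j) hgc
      (fun j => (continuous_apply j).comp hxc)
      (fun t ht a b hab => hdist t ht a b hab)
      (fun t _ => hval (x t) i)
    -- endpoint values of the path
    have hx1 : x 1 = Pi.single i (1:ℂ) := by
      funext j
      by_cases hjk : j = k
      · subst hjk
        simp only [hx, hre, hm, if_pos rfl]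
        rw [Pi.single_eq_of_ne (Ne.symm hik)]
        norm_num
      · by_cases hji : j = i
        · subst hji
          simp only [hx, hre, hm, if_neg hik]
          rw [Pi.single_eq_same]
          norm_num
        · simp only [hx, hre, hm, if_neg hjk]
          rw [if_neg hji, if_neg hji, Pi.single_eq_of_ne hji]
          norm_num
    have hx0 : x 0 = Pi.single k (1:ℂ) := by
      funext j
      by_cases hjk : j = k
      · subst hjk
        simp only [hx, hre, hm, if_pos rfl]
        rw [Pi.single_eq_same]
        norm_num
      · by_cases hji : j = i
        · subst hji
          simp only [hx, hre, hm, if_neg hik]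
          rw [Pi.single_eq_of_ne hik]
          norm_num
        · simp only [hx, hre, hm, if_neg hjk]
          rw [if_neg hji, if_neg hji, Pi.single_eq_of_ne hjk]
          norm_num
    -- value at t = 1
    have hg1 : (T⁻¹ * φ (Y (x 1)) * T) i i = 1 := by
      rw [hx1, ← hPY i, h i hik]
      have hcancel : T⁻¹ * (T * Matrix.single i i (1:ℂ) * T⁻¹) * T
          = Matrix.single i i (1:ℂ) := by
        simp only [Matrix.mul_assoc, Matrix.nonsing_inv_mul_cancel_left _ _ hTdet,
          Matrix.mul_nonsing_inv_cancel_left _ _ hTdet,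
          Matrix.nonsing_inv_mul _ hTdet, Matrix.mul_one]
      rw [hcancel, Matrix.single_apply_same]
    have h1mem : (1:ℝ) ∈ Set.Icc (0:ℝ) 1 := by norm_num
    have h0mem : (0:ℝ) ∈ Set.Icc (0:ℝ) 1 := by norm_num
    have hend1 := hj₀ 1 h1mem
    rw [hg1, hx1] at hend1
    have hj₀i : j₀ = i := by
      by_contra hne
      rw [Pi.single_eq_of_ne hne] at hend1
      exact one_ne_zero hend1
    have hend0 := hj₀ 0 h0mem
    rw [hx0, hj₀i, Pi.single_eq_of_ne hik] at hend0
    exact hend0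
  -- final assembly
  set d : Fin n → ℂ := fun p => (T⁻¹ * φ (Y (Pi.single k 1)) * T) p p with hd
  have hdg : T⁻¹ * φ (Y (Pi.single k 1)) * T = Matrix.diagonal d := hdiagY _
  have hone : ∃ p, d p = 1 := by
    have h1 : (1:ℂ) ∈ spectrum ℂ (Matrix.diagonal d) := by
      rw [← hdg]
      have h2 : spectrum ℂ (T⁻¹ * φ (Y (Pi.single k 1)) * T)
          = spectrum ℂ (φ (Y (Pi.single k 1))) :=
        spectrum_conj_left T (φ (Y (Pi.single k 1))) hTdet
      rw [h2, hspec _ (hYmem _), hspecY]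
      exact ⟨k, Pi.single_eq_same k 1⟩
    rw [spectrum_diagonal] at h1
    obtain ⟨p, hp⟩ := h1
    exact ⟨p, hp⟩
  have hdk : d = Pi.single k 1 := by
    funext p
    by_cases hpk : p = k
    · subst hpk
      rw [Pi.single_eq_same]
      obtain ⟨p', hp'⟩ := hone
      have hp'k : p' = p := by
        by_contra hc
        have h0 : d p' = 0 := claimA p' hc
        exact one_ne_zero (hp'.symm.trans h0)
      rw [← hp'k]; exact hp'
    · rw [Pi.single_eq_of_ne hpk]
      exact claimA p hpk
  have hφeq : φ (Y (Pi.single k 1)) = T * Matrix.diagonal (Pi.single k (1:ℂ)) * T⁻¹ := by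
    have hexp : φ (Y (Pi.single k 1)) = T * (T⁻¹ * φ (Y (Pi.single k 1)) * T) * T⁻¹ := by
      simp only [Matrix.mul_assoc, Matrix.mul_nonsing_inv_cancel_left _ _ hTdet]
      rw [Matrix.mul_nonsing_inv _ hTdet, Matrix.mul_one]
    rw [hexp, hdg, hdk]
  rw [hPY k, hφeq, stdBasis_eq_diag]
end
end
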